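/- arXiv:1608.03760 — 4 statements merged into one kernel-verified Lean document; each statement's English description precedes it below -/
import Mathlib

section
/- Let 0 < m ≤ n be integers, d = m+n, k = n−m, δ := z²−4xy, and let γ ∈ ℂ[x,y,z] be homogeneous of degree d defining a nodal curve Γ = {γ=0} such that Δ = {δ=0} is a simple contact conic of Γ. Suppose there exist a line L = {l=0} tangent to Δ and transversal to Γ and homogeneous polynomials c_n and c_{n−1} in ℂ[x,y,z], of degrees n and n−1 respectively, neither divisible by l, such that γ·l^k = c_n² − δ·c_{n−1}². Then γ splits with type (m,n) with respect to Δ. -/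
open MvPolynomial
open scoped Classical

noncomputable section

/-- The projective line over `ℂ`. -/
abbrev P1C := Projectivization ℂ (Fin 2 → ℂ)
/-- The projective plane over `ℂ`. -/
abbrev P2C := Projectivization ℂ (Fin 3 → ℂ)
/-- Projective 3-space over `ℂ`. -/
abbrev P3C := Projectivization ℂ (Fin 4 → ℂ)

/-- The quadratic form `δ = z² − 4xy` defining the conic `Δ`. -/
def δpoly : MvPolynomial (Fin 3) ℂ := X 2 ^ 2 - 4 * X 0 * X 1

/-- `P` is a singular point of the plane curve `{γ = 0}`. -/
def SingAt (γ : MvPolynomial (Fin 3) ℂ) (P : P2C) : Prop :=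
  eval P.rep γ = 0 ∧ ∀ i : Fin 3, eval P.rep (pderiv i γ) = 0

/-- `P` is a node of the plane curve `{γ = 0}`. -/
def NodeAt (γ : MvPolynomial (Fin 3) ℂ) (P : P2C) : Prop :=
  SingAt γ P ∧
    (Matrix.of fun i j : Fin 3 => eval P.rep (pderiv i (pderiv j γ))).rank = 2

/-- `{γ = 0}` is a nodal plane curve. -/
def NodalCurve (γ : MvPolynomial (Fin 3) ℂ) : Prop :=
  Squarefree γ ∧ ∀ P : P2C, SingAt γ P → NodeAt γ P

/-- Restriction of a ternary form to the conic `Δ`, via `(s:t) ↦ (s² : t² : 2st)`. -/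
def restrictΔ (f : MvPolynomial (Fin 3) ℂ) : MvPolynomial (Fin 2) ℂ :=
  aeval (fun j => (![X 0 ^ 2, X 1 ^ 2, 2 * X 0 * X 1] : Fin 3 → MvPolynomial (Fin 2) ℂ) j) f

/-- `Δ` is a simple contact conic of the degree-`d` curve `{γ = 0}`. -/
def SimpleContact (γ : MvPolynomial (Fin 3) ℂ) (d : ℕ) : Prop :=
  (∀ P : P2C, eval P.rep γ = 0 → eval P.rep δpoly = 0 → ¬ SingAt γ P) ∧
  ∃ (c : ℂ) (h : MvPolynomial (Fin 2) ℂ),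
    c ≠ 0 ∧ Squarefree h ∧ h.IsHomogeneous d ∧ restrictΔ γ = C c * h ^ 2

/-- The covering map `ℙ¹×ℙ¹ → ℙ²` on representatives. -/
def πvec (a b : Fin 2 → ℂ) : Fin 3 → ℂ := ![a 0 * b 0, a 1 * b 1, a 0 * b 1 + a 1 * b 0]

lemma vec2_eq_zero {x : Fin 2 → ℂ} (h0 : x 0 = 0) (h1 : x 1 = 0) : x = 0 := by
  ext i
  fin_cases i
  · simpa using h0
  · simpa using h1

lemma πvec_ne_zero {a b : Fin 2 → ℂ} (ha : a ≠ 0) (hb : b ≠ 0) : πvec a b ≠ 0 := by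
  intro h
  have h0 : a 0 * b 0 = 0 := by simpa [πvec] using congrFun h 0
  have h1 : a 1 * b 1 = 0 := by simpa [πvec] using congrFun h 1
  have h2 : a 0 * b 1 + a 1 * b 0 = 0 := by simpa [πvec] using congrFun h 2
  by_cases ha0 : a 0 = 0
  · have ha1 : a 1 ≠ 0 := fun h' => ha (vec2_eq_zero ha0 h')
    have hb1 : b 1 = 0 := by
      rcases mul_eq_zero.mp h1 with h' | h'
      · exact absurd h' ha1
      · exact h'
    have hb0 : b 0 = 0 := by
      have hz : a 1 * b 0 = 0 := by simpa [ha0, hb1] using h2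
      rcases mul_eq_zero.mp hz with h' | h'
      · exact absurd h' ha1
      · exact h'
    exact hb (vec2_eq_zero hb0 hb1)
  · have hb0 : b 0 = 0 := by
      rcases mul_eq_zero.mp h0 with h' | h'
      · exact absurd h' ha0
      · exact h'
    have hb1 : b 1 = 0 := by
      have hz : a 0 * b 1 = 0 := by simpa [hb0] using h2
      rcases mul_eq_zero.mp hz with h' | h'
      · exact absurd h' ha0
      · exact h'
    exact hb (vec2_eq_zero hb0 hb1)

/-- The double cover `π : ℙ¹×ℙ¹ → ℙ²` branched along `Δ`,
`π((s:t),(u:v)) = (su : tv : sv + tu)`. -/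
def πΔ (Q : P1C × P1C) : P2C :=
  Projectivization.mk ℂ (πvec Q.1.rep Q.2.rep)
    (πvec_ne_zero Q.1.rep_nonzero Q.2.rep_nonzero)

/-- The weights giving the bigrading on `ℂ[s,t,u,v]`. -/
def biwt : Fin 4 → ℕ × ℕ := ![(1,0),(1,0),(0,1),(0,1)]

/-- `p ∈ ℂ[s,t,u,v]` is bihomogeneous of bidegree `(a,b)`. -/
def Bihom (p : MvPolynomial (Fin 4) ℂ) (a b : ℕ) : Prop :=
  IsWeightedHomogeneous biwt p (a, b)

/-- The permutation of the variables `s,t,u,v` realizing the swap `(s,t) ↔ (u,v)`. -/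
def swapPerm : Equiv.Perm (Fin 4) := (Equiv.swap 0 2).trans (Equiv.swap 1 3)

/-- `p(u,v,s,t)`, the polynomial `p` composed with the covering involution. -/
def swapPoly (p : MvPolynomial (Fin 4) ℂ) : MvPolynomial (Fin 4) ℂ :=
  rename swapPerm p

/-- `γ(su, tv, sv + tu)`, the pull-back of a ternary form under `π`. -/
def pullΔ (γ : MvPolynomial (Fin 3) ℂ) : MvPolynomial (Fin 4) ℂ :=
  aeval (fun j => (![X 0 * X 2, X 1 * X 3, X 0 * X 3 + X 1 * X 2] :
    Fin 3 → MvPolynomial (Fin 4) ℂ) j) γ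

/-- `γ` splits with type `(m,n)` with respect to `Δ`. -/
def SplitsType (γ : MvPolynomial (Fin 3) ℂ) (m n : ℕ) : Prop :=
  ∃ dp : MvPolynomial (Fin 4) ℂ,
    dp ≠ 0 ∧ Bihom dp m n ∧ pullΔ γ = dp * swapPoly dp

/-- `{l = 0}` is a line tangent to `Δ`:
up to a nonzero scalar, `l = b²x + a²y − ab·z` with `(a,b) ≠ (0,0)`. -/
def TangentToΔ (l : MvPolynomial (Fin 3) ℂ) : Prop :=
  ∃ c a b : ℂ, c ≠ 0 ∧ (a ≠ 0 ∨ b ≠ 0) ∧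
    l = C c * (C (b ^ 2) * X 0 + C (a ^ 2) * X 1 - C (a * b) * X 2)

/-- The line `{l = 0}` is transversal to `{γ = 0}`: for a linear parameterization
of the line, the restricted binary form is squarefree. -/
def TransversalTo (γ l : MvPolynomial (Fin 3) ℂ) : Prop :=
  ∃ p q : Fin 3 → ℂ, LinearIndependent ℂ ![p, q] ∧ eval p l = 0 ∧ eval q l = 0 ∧
    Squarefree (aeval (fun j => (fun j => C (p j) * X 0 + C (q j) * X 1 :
      Fin 3 → MvPolynomial (Fin 2) ℂ) j) γ)

/-- The representative in `ℂ⁴` of a point of `ℙ¹×ℙ¹`. -/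
def pairRep (Q : P1C × P1C) : Fin 4 → ℂ :=
  ![Q.1.rep 0, Q.1.rep 1, Q.2.rep 0, Q.2.rep 1]

/-- Evaluation of `p ∈ ℂ[s,t,u,v]` at (a representative of) a point of `ℙ¹×ℙ¹`. -/
def evalPair (p : MvPolynomial (Fin 4) ℂ) (Q : P1C × P1C) : ℂ := eval (pairRep Q) p

/-- `Z = {Q ∈ ℙ¹×ℙ¹ : d⁺(Q) = 0 and d⁺(σ(Q)) = 0}`. -/
def Zset (dp : MvPolynomial (Fin 4) ℂ) : Set (P1C × P1C) :=
  {Q | evalPair dp Q = 0 ∧ evalPair dp Q.swap = 0}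

/-- Evaluation at a vector, as a linear map. -/
def evalLin {k : ℕ} (v : Fin k → ℂ) : MvPolynomial (Fin k) ℂ →ₗ[ℂ] ℂ :=
  (aeval v).toLinearMap

/-- The space of degree-`d` forms in `k` variables vanishing on a set `S` of
projective points. -/
def homVanish (k d : ℕ) (S : Set (Projectivization ℂ (Fin k → ℂ))) :
    Submodule ℂ (MvPolynomial (Fin k) ℂ) :=
  homogeneousSubmodule (Fin k) ℂ d ⊓ ⨅ P ∈ S, LinearMap.ker (evalLin P.rep)

/-- The space of bidegree-`(a,b)` forms vanishing on a set `S ⊆ ℙ¹×ℙ¹`. -/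
def biVanish (a b : ℕ) (S : Set (P1C × P1C)) : Submodule ℂ (MvPolynomial (Fin 4) ℂ) :=
  weightedHomogeneousSubmodule ℂ biwt (a, b) ⊓ ⨅ Q ∈ S, LinearMap.ker (evalLin (pairRep Q))

/-- `r` points of `ℙ¹×ℙ¹` are in general position. -/
def GenPosP1P1 {r : ℕ} (P : Fin r → P1C × P1C) : Prop :=
  Function.Injective P ∧
  (∀ Q : P1C, {i : Fin r | (P i).1 = Q}.ncard ≤ 2) ∧
  (∀ Q : P1C, {i : Fin r | (P i).2 = Q}.ncard ≤ 2) ∧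
  ∀ p : MvPolynomial (Fin 4) ℂ, p ≠ 0 → Bihom p 1 1 →
    ∀ S : Finset (Fin r), S.card = 5 → ¬ ∀ i ∈ S, evalPair p (P i) = 0

/-- `P` is a singular point of the surface `{F = 0} ⊆ ℙ³`. -/
def SingAt4 (F : MvPolynomial (Fin 4) ℂ) (P : P3C) : Prop :=
  eval P.rep F = 0 ∧ ∀ i : Fin 4, eval P.rep (pderiv i F) = 0

/-- `P` is a node of the surface `{F = 0} ⊆ ℙ³`. -/
def NodeAt4 (F : MvPolynomial (Fin 4) ℂ) (P : P3C) : Prop :=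
  SingAt4 F P ∧
    (Matrix.of fun i j : Fin 4 => eval P.rep (pderiv i (pderiv j F))).rank = 3

/-- `{F = 0}` is a nodal quartic surface in `ℙ³`. -/
def NodalQuartic (F : MvPolynomial (Fin 4) ℂ) : Prop :=
  F.IsHomogeneous 4 ∧ Squarefree F ∧ ∀ P : P3C, SingAt4 F P → NodeAt4 F P

/-- `r` points of `ℙ³` are in general position: no three collinear, no five on a
common hyperplane. -/
def GenPosP3 {r : ℕ} (P : Fin r → P3C) : Prop :=
  Function.Injective P ∧
  (∀ i j k : Fin r, i ≠ j → i ≠ k → j ≠ k →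
    LinearIndependent ℂ ![(P i).rep, (P j).rep, (P k).rep]) ∧
  ∀ φ : (Fin 4 → ℂ) →ₗ[ℂ] ℂ, φ ≠ 0 →
    ∀ S : Finset (Fin r), S.card = 5 → ¬ ∀ i ∈ S, φ (P i).rep = 0

/-- The inclusion `ℂ[x,y,z] → ℂ[x,y,z,w]`. -/
def liftP (f : MvPolynomial (Fin 3) ℂ) : MvPolynomial (Fin 4) ℂ :=
  rename Fin.castSucc f

lemma e3_ne_zero : (![0,0,0,1] : Fin 4 → ℂ) ≠ 0 := by
  intro h
  simpa using congrFun h 3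

/-- The point `P₀ = (0:0:0:1) ∈ ℙ³`. -/
def P0 : P3C := Projectivization.mk ℂ ![0,0,0,1] e3_ne_zero

/-- The surface `{F = 0}` contains no projective line through `P`. -/
def NoLineThrough (F : MvPolynomial (Fin 4) ℂ) (P : P3C) : Prop :=
  ¬ ∃ v : Fin 4 → ℂ, LinearIndependent ℂ ![P.rep, v] ∧
      ∀ a b : ℂ, eval (a • P.rep + b • v) F = 0

/-- Forget the last coordinate of (a representative of) a point of `ℙ³`. -/
def dropW (Q : P3C) : Fin 3 → ℂ := fun j => Q.rep j.castSucc

lemma e100_ne_zero : (![1,0,0] : Fin 3 → ℂ) ≠ 0 := by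
  intro h
  simpa using congrFun h 0

/-- The projection `ℙ³ ∖ {(0:0:0:1)} → ℙ²`, `(x:y:z:w) ↦ (x:y:z)`
(with junk value at `(0:0:0:1)`). -/
def projP0 (Q : P3C) : P2C :=
  if h : dropW Q ≠ 0 then Projectivization.mk ℂ (dropW Q) h
  else Projectivization.mk ℂ ![1,0,0] e100_ne_zero

end
noncomputable section Aux
open MvPolynomial

def lamP (a b : ℂ) : MvPolynomial (Fin 4) ℂ := C b * X 0 - C a * X 1
def lamQ (a b : ℂ) : MvPolynomial (Fin 4) ℂ := C b * X 2 - C a * X 3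
def qP : MvPolynomial (Fin 4) ℂ := X 0 * X 3 - X 1 * X 2

lemma eval_pull (f : MvPolynomial (Fin 3) ℂ) (p : Fin 4 → ℂ) :
    eval p (pullΔ f) = eval ![p 0 * p 2, p 1 * p 3, p 0 * p 3 + p 1 * p 2] f := by
  unfold pullΔ
  induction f using MvPolynomial.induction_on with
  | C a => simp
  | add f g hf hg => rw [map_add, map_add, map_add, hf, hg]
  | mul_X f i hf =>
      rw [map_mul, map_mul, hf, aeval_X, eval_mul, eval_X]
      congr 1
      fin_cases i <;> simp

lemma eval_pull' (f : MvPolynomial (Fin 3) ℂ) (s t u v : ℂ) :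
    eval ![s, t, u, v] (pullΔ f) = eval ![s * u, t * v, s * v + t * u] f := by
  have := eval_pull f ![s, t, u, v]
  simpa using this

lemma pull_eq_zero {f : MvPolynomial (Fin 3) ℂ} (h : pullΔ f = 0) : f = 0 := by
  have himg : ∀ s t u v : ℂ, eval ![s * u, t * v, s * v + t * u] f = 0 := by
    intro s t u v
    rw [← eval_pull', h, map_zero]
  have hv : ∀ p : Fin 3 → ℂ, p 0 ≠ 0 → eval p f = 0 := by
    intro p hp0
    obtain ⟨w, hw⟩ : ∃ w : ℂ, w ^ 2 = p 2 ^ 2 - 4 * (p 0 * p 1) :=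
      IsAlgClosed.exists_pow_nat_eq _ (by norm_num)
    set t : ℂ := (p 2 + w) / (2 * p 0) with ht
    have htw : t * (2 * p 0) = p 2 + w := by
      rw [ht]; field_simp
    have h4 : (4 * p 0) * (p 0 * t ^ 2 - p 2 * t + p 1) = 0 := by
      linear_combination (2 * p 0 * t - p 2 + w) * htw + hw
    have hquad : p 0 * t ^ 2 - p 2 * t + p 1 = 0 := by
      rcases mul_eq_zero.mp h4 with h' | h'
      · exact absurd h' (by simpa using hp0)
      · exact h'
    have hp : ![1 * p 0, t * (p 2 - t * p 0), 1 * (p 2 - t * p 0) + t * p 0] = p := by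
      funext i
      fin_cases i
      · simp
      · show t * (p 2 - t * p 0) = p 1
        linear_combination -hquad
      · show 1 * (p 2 - t * p 0) + t * p 0 = p 2
        ring
    rw [← hp]
    exact himg 1 t (p 0) (p 2 - t * p 0)
  have hmul : f * X 0 = 0 := by
    apply MvPolynomial.funext (q := 0)
    intro x
    rw [map_zero, eval_mul, eval_X]
    by_cases hx : x 0 = 0
    · rw [hx, mul_zero]
    · rw [hv x hx, zero_mul]
  rcases mul_eq_zero.mp hmul with h' | h'
  · exact h'
  · exact absurd h' (MvPolynomial.X_ne_zero 0)

end Aux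
section Aux2
open MvPolynomial

lemma swapPerm_vals : swapPerm 0 = 2 ∧ swapPerm 1 = 3 ∧ swapPerm 2 = 0 ∧ swapPerm 3 = 1 := by
  refine ⟨?_, ?_, ?_, ?_⟩ <;> simp [swapPerm, Equiv.swap_apply_def]

lemma swap_X0 : swapPoly (X 0 : MvPolynomial (Fin 4) ℂ) = X 2 := by
  rw [swapPoly, rename_X, swapPerm_vals.1]
lemma swap_X1 : swapPoly (X 1 : MvPolynomial (Fin 4) ℂ) = X 3 := by
  rw [swapPoly, rename_X, swapPerm_vals.2.1]
lemma swap_X2 : swapPoly (X 2 : MvPolynomial (Fin 4) ℂ) = X 0 := by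
  rw [swapPoly, rename_X, swapPerm_vals.2.2.1]
lemma swap_X3 : swapPoly (X 3 : MvPolynomial (Fin 4) ℂ) = X 1 := by
  rw [swapPoly, rename_X, swapPerm_vals.2.2.2]

lemma swap_C (e : ℂ) : swapPoly (C e : MvPolynomial (Fin 4) ℂ) = C e := by
  rw [swapPoly, rename_C]

lemma swap_mul (p q : MvPolynomial (Fin 4) ℂ) : swapPoly (p * q) = swapPoly p * swapPoly q :=
  map_mul (rename swapPerm) p q
lemma swap_add (p q : MvPolynomial (Fin 4) ℂ) : swapPoly (p + q) = swapPoly p + swapPoly q :=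
  map_add (rename swapPerm) p q
lemma swap_sub (p q : MvPolynomial (Fin 4) ℂ) : swapPoly (p - q) = swapPoly p - swapPoly q :=
  map_sub (rename swapPerm) p q
lemma swap_pow (p : MvPolynomial (Fin 4) ℂ) (k : ℕ) : swapPoly (p ^ k) = swapPoly p ^ k :=
  map_pow (rename swapPerm) p k

lemma swap_lam (a b : ℂ) : swapPoly (lamP a b) = lamQ a b := by
  rw [lamP, lamQ, swap_sub, swap_mul, swap_mul, swap_C, swap_C, swap_X0, swap_X1]

lemma swap_q : swapPoly qP = - qP := by
  rw [qP, swap_sub, swap_mul, swap_mul, swap_X0, swap_X1, swap_X2, swap_X3]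
  ring

lemma swap_pull (f : MvPolynomial (Fin 3) ℂ) : swapPoly (pullΔ f) = pullΔ f := by
  rw [swapPoly, pullΔ]
  have : (rename swapPerm) ((aeval fun j => (![X 0 * X 2, X 1 * X 3, X 0 * X 3 + X 1 * X 2] :
      Fin 3 → MvPolynomial (Fin 4) ℂ) j) f) =
      (aeval fun j => (rename swapPerm) ((![X 0 * X 2, X 1 * X 3, X 0 * X 3 + X 1 * X 2] :
      Fin 3 → MvPolynomial (Fin 4) ℂ) j)) f := by
    rw [← comp_aeval, AlgHom.coe_comp, Function.comp_apply]
  have hfun : (fun j => (rename swapPerm) ((![X 0 * X 2, X 1 * X 3, X 0 * X 3 + X 1 * X 2] :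
      Fin 3 → MvPolynomial (Fin 4) ℂ) j)) =
      (![X 0 * X 2, X 1 * X 3, X 0 * X 3 + X 1 * X 2] : Fin 3 → MvPolynomial (Fin 4) ℂ) := by
    funext j
    fin_cases j <;>
      simp [rename_X, swapPerm_vals.1, swapPerm_vals.2.1, swapPerm_vals.2.2.1,
        swapPerm_vals.2.2.2] <;> ring
  rw [this, hfun]

end Aux2
section Aux3
open MvPolynomial

lemma eval_poly_eval (x : Fin 2 → ℂ) (P : Polynomial (MvPolynomial (Fin 2) ℂ))
    (r : MvPolynomial (Fin 2) ℂ) :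
    eval x (P.eval r) = Polynomial.eval (eval x r) (P.map (eval x)) := by
  rw [Polynomial.eval_map]
  have h1 : P.eval r = P.eval₂ (RingHom.id _) r := rfl
  rw [h1, Polynomial.hom_eval₂, RingHom.comp_id]

lemma dvd_of_vanish0 (d1 d2 : ℂ) (f : MvPolynomial (Fin 3) ℂ)
    (h : ∀ p : Fin 3 → ℂ, p 0 = d1 * p 1 + d2 * p 2 → eval p f = 0) :
    (X 0 - (C d1 * X 1 + C d2 * X 2)) ∣ f := by
  set Φ := finSuccEquiv ℂ 2 with hΦ
  set r : MvPolynomial (Fin 2) ℂ := C d1 * X 0 + C d2 * X 1 with hr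
  have hroot : (Φ f).eval r = 0 := by
    apply MvPolynomial.funext (q := 0)
    intro x
    rw [map_zero, eval_poly_eval, ← eval_eq_eval_mv_eval']
    apply h
    have h0 : (Fin.cons (eval x r) x : Fin 3 → ℂ) 0 = eval x r := rfl
    have h1 : (Fin.cons (eval x r) x : Fin 3 → ℂ) 1 = x 0 := rfl
    have h2 : (Fin.cons (eval x r) x : Fin 3 → ℂ) 2 = x 1 := rfl
    rw [h0, h1, h2, hr]
    simp
  have hdiv : (Polynomial.X - Polynomial.C r) ∣ Φ f := Polynomial.dvd_iff_isRoot.mpr hroot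
  obtain ⟨g, hg⟩ := hdiv
  refine ⟨Φ.symm g, ?_⟩
  apply Φ.injective
  rw [map_mul]
  have hlin : Φ (X 0 - (C d1 * X 1 + C d2 * X 2)) = Polynomial.X - Polynomial.C r := by
    have e1 : (1 : Fin 3) = Fin.succ 0 := rfl
    have e2 : (2 : Fin 3) = Fin.succ 1 := rfl
    rw [map_sub, map_add, map_mul, map_mul, hΦ, finSuccEquiv_X_zero, e1, e2,
      finSuccEquiv_X_succ, finSuccEquiv_X_succ]
    have hC : ∀ c : ℂ, finSuccEquiv ℂ 2 (C c) = Polynomial.C (C c) := by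
      intro c
      rw [finSuccEquiv_apply]
      simp
    rw [hC, hC, hr]
    push_cast [Polynomial.C_add, Polynomial.C_mul]
    ring
  rw [hlin, AlgEquiv.apply_symm_apply, hg]

lemma dvd_of_vanish1 (d1 d2 : ℂ) (f : MvPolynomial (Fin 3) ℂ)
    (h : ∀ p : Fin 3 → ℂ, p 1 = d1 * p 0 + d2 * p 2 → eval p f = 0) :
    (X 1 - (C d1 * X 0 + C d2 * X 2)) ∣ f := by
  set σ : Equiv.Perm (Fin 3) := Equiv.swap 0 1 with hσ
  have h0 : ∀ p : Fin 3 → ℂ, p 0 = d1 * p 1 + d2 * p 2 → eval p (rename σ f) = 0 := by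
    intro p hp
    rw [eval_rename]
    apply h
    have e0 : (p ∘ σ) 1 = p 0 := by simp [hσ]
    have e1 : (p ∘ σ) 0 = p 1 := by simp [hσ]
    have e2 : (p ∘ σ) 2 = p 2 := by simp [hσ, Equiv.swap_apply_of_ne_of_ne]
    rw [e0, e1, e2, hp]
  have hdvd := dvd_of_vanish0 d1 d2 _ h0
  have hmap := map_dvd (rename (σ : Fin 3 → Fin 3)) hdvd
  have hff : rename (σ : Fin 3 → Fin 3) (rename (σ : Fin 3 → Fin 3) f) = f := by
    rw [rename_rename]
    have : ((σ : Fin 3 → Fin 3) ∘ (σ : Fin 3 → Fin 3)) = id := by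
      funext i
      simp [hσ]
    rw [this, rename_id, AlgHom.id_apply]
  rw [hff] at hmap
  have hren : rename (σ : Fin 3 → Fin 3) (X 0 - (C d1 * X 1 + C d2 * X 2)) =
      (X 1 - (C d1 * X 0 + C d2 * X 2) : MvPolynomial (Fin 3) ℂ) := by
    rw [map_sub, map_add, map_mul, map_mul, rename_X, rename_C, rename_C, rename_X, rename_X]
    have e0 : σ 0 = 1 := by simp [hσ]
    have e1 : σ 1 = 0 := by simp [hσ]
    have e2 : σ 2 = 2 := by simp [hσ, Equiv.swap_apply_of_ne_of_ne]
    rw [e0, e1, e2]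
  rwa [hren] at hmap

end Aux3
section Aux4
open MvPolynomial

lemma lam_vanish {a b : ℂ} {f : MvPolynomial (Fin 3) ℂ} (hdvd : lamP a b ∣ pullΔ f) :
    ∀ u v : ℂ, eval ![a * u, b * v, a * v + b * u] f = 0 := by
  obtain ⟨g, hg⟩ := hdvd
  intro u v
  have h2 := congrArg (eval ![a, b, u, v]) hg
  rw [eval_pull'] at h2
  rw [h2, eval_mul]
  have : eval ![a, b, u, v] (lamP a b) = 0 := by
    simp [lamP]
    ring
  rw [this, zero_mul]

lemma lam_dvd_imp {a b : ℂ} (hab : a ≠ 0 ∨ b ≠ 0) {f : MvPolynomial (Fin 3) ℂ}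
    (hdvd : lamP a b ∣ pullΔ f) :
    (C (b ^ 2) * X 0 + C (a ^ 2) * X 1 - C (a * b) * X 2) ∣ f := by
  have hv := lam_vanish hdvd
  by_cases hb : b = 0
  · -- a ≠ 0, ℓ = C a² * X 1
    have ha : a ≠ 0 := hab.resolve_right (fun h => h hb)
    have h1 : ∀ p : Fin 3 → ℂ, p 1 = 0 * p 0 + 0 * p 2 → eval p f = 0 := by
      intro p hp
      have hp1 : p 1 = 0 := by rw [hp]; ring
      have hpv : ![a * (p 0 / a), b * (p 2 / a), a * (p 2 / a) + b * (p 0 / a)] = p := by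
        funext i
        fin_cases i
        · show a * (p 0 / a) = p 0
          field_simp
        · show b * (p 2 / a) = p 1
          rw [hb, hp1]; ring
        · show a * (p 2 / a) + b * (p 0 / a) = p 2
          rw [hb]; field_simp; ring
      rw [← hpv]
      exact hv (p 0 / a) (p 2 / a)
    have hdvd1 := dvd_of_vanish1 0 0 f h1
    obtain ⟨g, hg⟩ := hdvd1
    refine ⟨C ((a ^ 2)⁻¹) * g, ?_⟩
    have hC1 : (C (a ^ 2) : MvPolynomial (Fin 3) ℂ) * C ((a ^ 2)⁻¹) = 1 := by
      rw [← C_mul, mul_inv_cancel₀ (pow_ne_zero 2 ha), C_1]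
    rw [hg, hb]
    have e1 : ((0 : ℂ) ^ 2) = 0 := by norm_num
    have e2 : (a * 0 : ℂ) = 0 := by ring
    rw [e1, e2, C_0]
    linear_combination (-(X 1 : MvPolynomial (Fin 3) ℂ) * g) * hC1
  · -- b ≠ 0
    set d1 : ℂ := -(a ^ 2) / b ^ 2 with hd1
    set d2 : ℂ := a / b with hd2
    have h1 : ∀ p : Fin 3 → ℂ, p 0 = d1 * p 1 + d2 * p 2 → eval p f = 0 := by
      intro p hp
      set v : ℂ := p 1 / b with hvdef
      set u : ℂ := (p 2 - a * v) / b with hudef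
      have hpv : ![a * u, b * v, a * v + b * u] = p := by
        funext i
        fin_cases i
        · show a * u = p 0
          rw [hudef, hvdef, hp, hd1, hd2]
          field_simp
          ring
        · show b * v = p 1
          rw [hvdef]; field_simp
        · show a * v + b * u = p 2
          rw [hudef]; field_simp; ring
      rw [← hpv]
      exact hv u v
    have hdvd0 := dvd_of_vanish0 d1 d2 f h1
    obtain ⟨g, hg⟩ := hdvd0
    refine ⟨C ((b ^ 2)⁻¹) * g, ?_⟩
    have hC1 : (C (b ^ 2) : MvPolynomial (Fin 3) ℂ) * C ((b ^ 2)⁻¹) = 1 := by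
      rw [← C_mul, mul_inv_cancel₀ (pow_ne_zero 2 hb), C_1]
    have hsc1 : b ^ 2 * d1 = -(a ^ 2) := by rw [hd1]; field_simp
    have hsc2 : b ^ 2 * d2 = a * b := by rw [hd2]; field_simp
    have hC3 : (C (b ^ 2) : MvPolynomial (Fin 3) ℂ) * C d1 = -C (a ^ 2) := by
      rw [← C_mul, hsc1, C_neg]
    have hC4 : (C (b ^ 2) : MvPolynomial (Fin 3) ℂ) * C d2 = C (a * b) := by
      rw [← C_mul, hsc2]
    have hform : (C (b ^ 2) * X 0 + C (a ^ 2) * X 1 - C (a * b) * X 2 : MvPolynomial (Fin 3) ℂ) =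
        C (b ^ 2) * (X 0 - (C d1 * X 1 + C d2 * X 2)) := by
      linear_combination (X 1 : MvPolynomial (Fin 3) ℂ) * hC3 + (X 2 : MvPolynomial (Fin 3) ℂ) * hC4
    rw [hform, hg]
    linear_combination (-((X 0 - (C d1 * X 1 + C d2 * X 2)) * g)) * hC1
lemma lam_not_dvd_q {a b : ℂ} (hab : a ≠ 0 ∨ b ≠ 0) : ¬ lamP a b ∣ qP := by
  rintro ⟨g, hg⟩
  rcases hab with ha | hb
  · have h2 := congrArg (eval ![a, b, 0, 1]) hg
    simp [qP, lamP] at h2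
    exact ha (by linear_combination h2)
  · have h2 := congrArg (eval ![a, b, -1, 0]) hg
    simp [qP, lamP] at h2
    exact hb (by linear_combination h2)

end Aux4
section Aux5
open MvPolynomial

lemma prime_linear {R : Type*} [CommRing R] [IsDomain R] {α β : R} (hα : IsUnit α) :
    Prime (Polynomial.C α * Polynomial.X + Polynomial.C β) := by
  obtain ⟨u, rfl⟩ := hα
  have hu : (↑u : R) * (↑u⁻¹ * β) = β := u.mul_inv_cancel_left β
  have hass : Associated (Polynomial.X - Polynomial.C (-((↑u⁻¹ : R) * β)))
      (Polynomial.C (↑u : R) * Polynomial.X + Polynomial.C β) := by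
    refine ⟨(Polynomial.isUnit_C.mpr u.isUnit).unit, ?_⟩
    rw [IsUnit.unit_spec, Polynomial.C_neg, sub_neg_eq_add, add_mul,
      ← Polynomial.C_mul, mul_comm ((↑u⁻¹ : R) * β) (↑u : R), hu]
    ring
  exact hass.prime (Polynomial.prime_X_sub_C _)

lemma finSuccEquiv_C' (c : ℂ) : finSuccEquiv ℂ 3 (C c) = Polynomial.C (C c) := by
  rw [finSuccEquiv_apply]
  simp

lemma prime_lam0 {a b : ℂ} (hb : b ≠ 0) : Prime (lamP a b) := by
  rw [← MulEquiv.prime_iff (finSuccEquiv ℂ 3).toMulEquiv]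
  have hΦ : (finSuccEquiv ℂ 3).toMulEquiv (lamP a b) =
      Polynomial.C (C b) * Polynomial.X + Polynomial.C (-(C a * X 0)) := by
    show finSuccEquiv ℂ 3 (lamP a b) = _
    rw [lamP, map_sub, map_mul, map_mul, finSuccEquiv_X_zero]
    have e1 : (1 : Fin 4) = Fin.succ 0 := rfl
    rw [e1, finSuccEquiv_X_succ, finSuccEquiv_C', finSuccEquiv_C', map_neg, map_mul]
    ring
  rw [hΦ]
  have hCb : IsUnit (C b : MvPolynomial (Fin 3) ℂ) :=
    (isUnit_iff_ne_zero.mpr hb).map (C : ℂ →+* MvPolynomial (Fin 3) ℂ)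
  exact prime_linear hCb

lemma prime_lam {a b : ℂ} (hab : a ≠ 0 ∨ b ≠ 0) : Prime (lamP a b) := by
  by_cases hb : b = 0
  · have ha := hab.resolve_right (fun h => h hb)
    rw [← MulEquiv.prime_iff (renameEquiv ℂ (Equiv.swap (0 : Fin 4) 1)).toMulEquiv]
    have hr : (renameEquiv ℂ (Equiv.swap (0 : Fin 4) 1)).toMulEquiv (lamP a b) =
        lamP (-b) (-a) := by
      show rename (⇑(Equiv.swap (0 : Fin 4) 1)) (lamP a b) = lamP (-b) (-a)
      rw [lamP, map_sub, map_mul, map_mul, rename_C, rename_C, rename_X, rename_X, lamP]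
      rw [Equiv.swap_apply_left, Equiv.swap_apply_right, C_neg, C_neg]
      ring
    rw [hr]
    exact prime_lam0 (neg_ne_zero.mpr ha)
  · exact prime_lam0 hb

lemma prime_lamQ {a b : ℂ} (hab : a ≠ 0 ∨ b ≠ 0) : Prime (lamQ a b) := by
  have h1 := prime_lam hab
  rw [← MulEquiv.prime_iff (renameEquiv ℂ swapPerm).toMulEquiv] at h1
  have : (renameEquiv ℂ swapPerm).toMulEquiv (lamP a b) = lamQ a b := by
    show rename (⇑swapPerm) (lamP a b) = lamQ a b
    rw [← swapPoly, swap_lam]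
  rwa [this] at h1

end Aux5
section Aux6
open MvPolynomial

lemma isWH_pow {σ : Type*} {w : σ → ℕ × ℕ} {p : MvPolynomial σ ℂ} {u : ℕ × ℕ}
    (hp : IsWeightedHomogeneous w p u) (k : ℕ) : IsWeightedHomogeneous w (p ^ k) (k • u) := by
  induction k with
  | zero => simpa using isWeightedHomogeneous_one ℂ w
  | succ k ih =>
      rw [pow_succ, succ_nsmul]
      exact ih.mul hp

lemma bihom_pull {f : MvPolynomial (Fin 3) ℂ} {d : ℕ} (hf : f.IsHomogeneous d) :
    IsWeightedHomogeneous biwt (pullΔ f) ((d : ℕ), (d : ℕ)) := by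
  classical
  have hv : ∀ j : Fin 3, IsWeightedHomogeneous biwt
      ((![X 0 * X 2, X 1 * X 3, X 0 * X 3 + X 1 * X 2] : Fin 3 → MvPolynomial (Fin 4) ℂ) j)
      (1, 1) := by
    intro j
    have h0 := isWeightedHomogeneous_X ℂ biwt (0 : Fin 4)
    have h1 := isWeightedHomogeneous_X ℂ biwt (1 : Fin 4)
    have h2 := isWeightedHomogeneous_X ℂ biwt (2 : Fin 4)
    have h3 := isWeightedHomogeneous_X ℂ biwt (3 : Fin 4)
    have e0 : biwt 0 = (1, 0) := rfl
    have e1 : biwt 1 = (1, 0) := rfl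
    have e2 : biwt 2 = (0, 1) := rfl
    have e3 : biwt 3 = (0, 1) := rfl
    rw [e0] at h0; rw [e1] at h1; rw [e2] at h2; rw [e3] at h3
    fin_cases j
    · exact h0.mul h2
    · exact h1.mul h3
    · exact (h0.mul h3).add (h1.mul h2)
  have hsum : pullΔ f = ∑ m ∈ f.support, pullΔ (monomial m (coeff m f)) := by
    unfold pullΔ
    conv_lhs => rw [f.as_sum]
    exact map_sum _ _ _
  rw [hsum]
  apply IsWeightedHomogeneous.sum
  intro m hm
  rw [pullΔ, aeval_monomial]
  have hdeg : ∑ i ∈ m.support, m i = d := by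
    have := hf (mem_support_iff.mp hm)
    rw [Finsupp.weight_apply] at this
    simpa [Finsupp.sum] using this
  have hprod : IsWeightedHomogeneous biwt
      (m.prod fun i k => (![X 0 * X 2, X 1 * X 3, X 0 * X 3 + X 1 * X 2] :
        Fin 3 → MvPolynomial (Fin 4) ℂ) i ^ k)
      (∑ i ∈ m.support, (m i) • ((1, 1) : ℕ × ℕ)) := by
    rw [Finsupp.prod]
    exact IsWeightedHomogeneous.prod m.support _ _ (fun i _ => isWH_pow (hv i) (m i))
  have hwt : (∑ i ∈ m.support, (m i) • ((1, 1) : ℕ × ℕ)) = ((d : ℕ), (d : ℕ)) := by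
    rw [← Finset.sum_smul, hdeg, Prod.smul_mk]; simp
  rw [hwt] at hprod
  have := (isWeightedHomogeneous_C biwt (coeff m f)
    (σ := Fin 4)).mul hprod
  rw [zero_add] at this
  simpa [algebraMap_eq] using this

lemma isWH_of_mul_left {p q : MvPolynomial (Fin 4) ℂ} {u v : ℕ × ℕ}
    (hp : IsWeightedHomogeneous biwt p u) (hp0 : p ≠ 0)
    (hpq : IsWeightedHomogeneous biwt (p * q) (u + v)) :
    IsWeightedHomogeneous biwt q v := by
  classical
  have hfin := weightedHomogeneousComponent_finsupp (w := biwt) q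
  set T : Finset (ℕ × ℕ) := hfin.toFinset with hT
  have hdecomp : q = ∑ x ∈ T, weightedHomogeneousComponent biwt x q := by
    rw [← finsum_eq_sum _ hfin, sum_weightedHomogeneousComponent]
  have hcomp0 : ∀ x : ℕ × ℕ, x ≠ v → p * weightedHomogeneousComponent biwt x q = 0 := by
    intro x hx
    have hpqsum : p * q = ∑ y ∈ T, p * weightedHomogeneousComponent biwt y q := by
      rw [← Finset.mul_sum, ← hdecomp]
    have hL : weightedHomogeneousComponent biwt (u + x) (p * q) =
        ∑ y ∈ T, weightedHomogeneousComponent biwt (u + x)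
          (p * weightedHomogeneousComponent biwt y q) := by
      rw [hpqsum, map_sum]
    have hR : ∀ y ∈ T, y ≠ x →
        weightedHomogeneousComponent biwt (u + x) (p * weightedHomogeneousComponent biwt y q)
          = 0 := by
      intro y _ hy
      apply IsWeightedHomogeneous.weightedHomogeneousComponent_ne _
        (hp.mul (weightedHomogeneousComponent_isWeightedHomogeneous y q))
      intro hcon
      exact hy (add_left_cancel hcon).symm
    have hzero : weightedHomogeneousComponent biwt (u + x) (p * q) = 0 := by
      apply IsWeightedHomogeneous.weightedHomogeneousComponent_ne _ hpq
      intro hcon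
      exact hx (add_left_cancel hcon)
    by_cases hxT : x ∈ T
    · have := hL
      rw [Finset.sum_eq_single_of_mem x hxT (fun y hy hyx => hR y hy hyx), hzero] at this
      rw [← IsWeightedHomogeneous.weightedHomogeneousComponent_same
        (hp.mul (weightedHomogeneousComponent_isWeightedHomogeneous x q)), ← this]
    · have : weightedHomogeneousComponent biwt x q = 0 := by
        by_contra h0
        exact hxT (hfin.mem_toFinset.mpr h0)
      rw [this, mul_zero]
  have hists : ∀ x : ℕ × ℕ, x ≠ v → weightedHomogeneousComponent biwt x q = 0 := by
    intro x hx
    rcases mul_eq_zero.mp (hcomp0 x hx) with h' | h'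
    · exact absurd h' hp0
    · exact h'
  have hqv : q = weightedHomogeneousComponent biwt v q := by
    conv_lhs => rw [hdecomp]
    exact Finset.sum_eq_single v (fun y _ hy => hists y hy) (fun hvT => by
      by_contra h0
      exact hvT (hfin.mem_toFinset.mpr h0))
  rw [hqv]
  exact weightedHomogeneousComponent_isWeightedHomogeneous v q

end Aux6
section Aux7
open MvPolynomial

lemma bihom_lamP (a b : ℂ) : MvPolynomial.IsWeightedHomogeneous biwt (lamP a b) (1, 0) := by
  have h0 := isWeightedHomogeneous_X ℂ biwt (0 : Fin 4)
  have h1 := isWeightedHomogeneous_X ℂ biwt (1 : Fin 4)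
  have hmem : lamP a b ∈ weightedHomogeneousSubmodule ℂ biwt (1, 0) := by
    apply sub_mem
    · exact (mem_weightedHomogeneousSubmodule _ _ _ _).mpr
        (by simpa [biwt] using (isWeightedHomogeneous_C biwt b (σ := Fin 4)).mul h0)
    · exact (mem_weightedHomogeneousSubmodule _ _ _ _).mpr
        (by simpa [biwt] using (isWeightedHomogeneous_C biwt a (σ := Fin 4)).mul h1)
  exact (mem_weightedHomogeneousSubmodule _ _ _ _).mp hmem

lemma bihom_qP : MvPolynomial.IsWeightedHomogeneous biwt qP (1, 1) := by
  have h0 := isWeightedHomogeneous_X ℂ biwt (0 : Fin 4)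
  have h1 := isWeightedHomogeneous_X ℂ biwt (1 : Fin 4)
  have h2 := isWeightedHomogeneous_X ℂ biwt (2 : Fin 4)
  have h3 := isWeightedHomogeneous_X ℂ biwt (3 : Fin 4)
  have hmem : qP ∈ weightedHomogeneousSubmodule ℂ biwt (1, 1) := by
    apply sub_mem
    · exact (mem_weightedHomogeneousSubmodule _ _ _ _).mpr (h0.mul h3)
    · exact (mem_weightedHomogeneousSubmodule _ _ _ _).mpr (h1.mul h2)
  exact (mem_weightedHomogeneousSubmodule _ _ _ _).mp hmem

lemma main_aux (m n : ℕ) (hm : 0 < m) (hmn : m ≤ n)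
    (γ : MvPolynomial (Fin 3) ℂ) (hγ0 : γ ≠ 0)
    (c a b : ℂ) (hc : c ≠ 0) (hab : a ≠ 0 ∨ b ≠ 0)
    (cn cn1 : MvPolynomial (Fin 3) ℂ) (hcn : cn.IsHomogeneous n)
    (hcn1 : cn1.IsHomogeneous (n - 1))
    (heq2 : pullΔ γ * C (c ^ (n - m)) * lamP a b ^ (n - m) * lamQ a b ^ (n - m)
        = (pullΔ cn - qP * pullΔ cn1) * (pullΔ cn + qP * pullΔ cn1))
    (hdvd : lamP a b ^ (n - m) ∣ (pullΔ cn - qP * pullΔ cn1)) :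
    SplitsType γ m n := by
  obtain ⟨E, hE⟩ := hdvd
  have hswapE : pullΔ cn + qP * pullΔ cn1 = lamQ a b ^ (n - m) * swapPoly E := by
    have h1 := congrArg swapPoly hE
    rw [swap_sub, swap_mul, swap_q, swap_pull, swap_pull, swap_mul, swap_pow, swap_lam] at h1
    linear_combination h1
  have hlamne : lamP a b ^ (n - m) * lamQ a b ^ (n - m) ≠ 0 :=
    mul_ne_zero (pow_ne_zero _ (prime_lam hab).ne_zero)
      (pow_ne_zero _ (prime_lamQ hab).ne_zero)
  have key : pullΔ γ * C (c ^ (n - m)) = E * swapPoly E := by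
    apply mul_left_cancel₀ hlamne
    linear_combination heq2 + (pullΔ cn + qP * pullΔ cn1) * hE
      + (lamP a b ^ (n - m) * E) * hswapE
  have hck : (c : ℂ) ^ (n - m) ≠ 0 := pow_ne_zero _ hc
  obtain ⟨e, he⟩ : ∃ e : ℂ, e ^ 2 = (c ^ (n - m))⁻¹ :=
    IsAlgClosed.exists_pow_nat_eq _ (by norm_num)
  have hinv0 : ((c ^ (n - m))⁻¹ : ℂ) ≠ 0 := inv_ne_zero hck
  have he0 : e ≠ 0 := by
    intro h
    rw [h] at he
    exact hinv0 (by simpa using he.symm)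
  have hE0 : E ≠ 0 := by
    intro h
    rw [h] at key
    rw [show (0 : MvPolynomial (Fin 4) ℂ) * swapPoly 0 = 0 by rw [zero_mul]] at key
    rcases mul_eq_zero.mp key with h' | h'
    · exact hγ0 (pull_eq_zero h')
    · exact hck (C_eq_zero.mp h')
  refine ⟨C e * E, mul_ne_zero (fun hC => he0 (C_eq_zero.mp hC)) hE0, ?_, ?_⟩
  · -- Bihom
    have hAB : MvPolynomial.IsWeightedHomogeneous biwt
        (pullΔ cn - qP * pullΔ cn1) ((n : ℕ), (n : ℕ)) := by
      have hA := bihom_pull hcn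
      have hB := bihom_pull hcn1
      have hqB := bihom_qP.mul hB
      have hw : ((1, 1) : ℕ × ℕ) + ((n - 1 : ℕ), (n - 1 : ℕ)) = ((n : ℕ), (n : ℕ)) := by
        rw [Prod.mk_add_mk, Prod.mk.injEq]
        omega
      rw [hw] at hqB
      exact (mem_weightedHomogeneousSubmodule _ _ _ _).mp
        (sub_mem ((mem_weightedHomogeneousSubmodule _ _ _ _).mpr hA)
          ((mem_weightedHomogeneousSubmodule _ _ _ _).mpr hqB))
    have hlamk : MvPolynomial.IsWeightedHomogeneous biwt (lamP a b ^ (n - m))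
        ((n - m : ℕ), (0 : ℕ)) := by
      have := isWH_pow (bihom_lamP a b) (n - m)
      have hw : (n - m) • ((1, 0) : ℕ × ℕ) = ((n - m : ℕ), (0 : ℕ)) := by
        rw [Prod.smul_mk]
        simp
      rwa [hw] at this
    have hmulWH : MvPolynomial.IsWeightedHomogeneous biwt (lamP a b ^ (n - m) * E)
        (((n - m : ℕ), (0 : ℕ)) + ((m : ℕ), (n : ℕ))) := by
      have hw : (((n - m : ℕ), (0 : ℕ)) : ℕ × ℕ) + ((m : ℕ), (n : ℕ)) = ((n : ℕ), (n : ℕ)) := by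
        rw [Prod.mk_add_mk, Prod.mk.injEq]
        omega
      rw [hw, ← hE]
      exact hAB
    have hEw : MvPolynomial.IsWeightedHomogeneous biwt E ((m : ℕ), (n : ℕ)) :=
      isWH_of_mul_left hlamk (pow_ne_zero _ (prime_lam hab).ne_zero) hmulWH
    show MvPolynomial.IsWeightedHomogeneous biwt (C e * E) ((m : ℕ), (n : ℕ))
    exact (mem_weightedHomogeneousSubmodule _ _ _ _).mp
      (by rw [C_mul']
          exact Submodule.smul_mem _ e ((mem_weightedHomogeneousSubmodule _ _ _ _).mpr hEw))
  · -- equation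
    have hswapdp : swapPoly (C e * E) = C e * swapPoly E := by
      rw [swap_mul, swap_C]
    rw [hswapdp]
    have hCe : (C e : MvPolynomial (Fin 4) ℂ) * C e = C ((c ^ (n - m))⁻¹) := by
      rw [← C_mul, ← pow_two, he]
    have hinv : (C (c ^ (n - m)) : MvPolynomial (Fin 4) ℂ) * C ((c ^ (n - m))⁻¹) = 1 := by
      rw [← C_mul, mul_inv_cancel₀ hck, C_1]
    linear_combination (C ((c ^ (n - m))⁻¹) : MvPolynomial (Fin 4) ℂ) * key
      - pullΔ γ * hinv - (E * swapPoly E) * hCe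

end Aux7
section Aux8
open MvPolynomial

lemma l_dvd_of_ell_dvd {c a b : ℂ} (hc : c ≠ 0) {f : MvPolynomial (Fin 3) ℂ}
    (h : (C (b ^ 2) * X 0 + C (a ^ 2) * X 1 - C (a * b) * X 2) ∣ f) :
    (C c * (C (b ^ 2) * X 0 + C (a ^ 2) * X 1 - C (a * b) * X 2)) ∣ f := by
  obtain ⟨g, hg⟩ := h
  refine ⟨C c⁻¹ * g, ?_⟩
  have h1 : (C c : MvPolynomial (Fin 3) ℂ) * C c⁻¹ = 1 := by
    rw [← C_mul, mul_inv_cancel₀ hc, C_1]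
  rw [hg]
  linear_combination (-((C (b ^ 2) * X 0 + C (a ^ 2) * X 1 - C (a * b) * X 2) * g)) * h1

end Aux8

theorem contact_equation_implies_splitting (m n : ℕ) (hm : 0 < m) (hmn : m ≤ n)
    (γ : MvPolynomial (Fin 3) ℂ) (hγd : γ.IsHomogeneous (m + n))
    (hnodal : NodalCurve γ) (hcontact : SimpleContact γ (m + n))
    (l : MvPolynomial (Fin 3) ℂ) (htan : TangentToΔ l) (htrans : TransversalTo γ l)
    (cn cn1 : MvPolynomial (Fin 3) ℂ)
    (hcn : cn.IsHomogeneous n) (hcn1 : cn1.IsHomogeneous (n - 1))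
    (hl1 : ¬ l ∣ cn) (hl2 : ¬ l ∣ cn1)
    (heq : γ * l ^ (n - m) = cn ^ 2 - δpoly * cn1 ^ 2) :
    SplitsType γ m n := by
  obtain ⟨c, a, b, hc, hab, hl⟩ := htan
  have hγ0 : γ ≠ 0 := by
    intro h
    rw [h] at hnodal
    exact not_squarefree_zero hnodal.1
  have hprime := prime_lam (a := a) (b := b) hab
  -- pullbacks
  have pull_l : pullΔ l = C c * (lamP a b * lamQ a b) := by
    rw [hl]
    unfold pullΔ
    simp only [map_mul, map_add, map_sub, aeval_C, aeval_X, algebraMap_eq,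
      Matrix.cons_val_zero, Matrix.cons_val_one, Matrix.head_cons, Matrix.cons_val_two,
      Matrix.tail_cons]
    simp only [map_pow]
    rw [lamP, lamQ]
    ring
  have pull_δ : pullΔ δpoly = qP ^ 2 := by
    unfold pullΔ δpoly
    simp only [map_sub, map_pow, map_mul, map_ofNat, aeval_C, aeval_X, algebraMap_eq,
      Matrix.cons_val_zero, Matrix.cons_val_one, Matrix.head_cons, Matrix.cons_val_two,
      Matrix.tail_cons]
    rw [qP]
    ring
  have hγl : pullΔ γ * (C c * (lamP a b * lamQ a b)) ^ (n - m) =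
      (pullΔ cn) ^ 2 - qP ^ 2 * (pullΔ cn1) ^ 2 := by
    rw [← pull_l, ← pull_δ]
    show pullΔ γ * (pullΔ l) ^ (n - m) = (pullΔ cn) ^ 2 - pullΔ δpoly * (pullΔ cn1) ^ 2
    unfold pullΔ
    rw [← map_pow, ← map_mul, ← map_pow, ← map_pow, ← map_mul, ← map_sub]
    exact congrArg _ heq
  have heq2 : pullΔ γ * C (c ^ (n - m)) * lamP a b ^ (n - m) * lamQ a b ^ (n - m)
      = (pullΔ cn - qP * pullΔ cn1) * (pullΔ cn + qP * pullΔ cn1) := by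
    have hCp : (C (c ^ (n - m)) : MvPolynomial (Fin 4) ℂ) = (C c) ^ (n - m) := by
      rw [map_pow]
    rw [hCp]
    linear_combination hγl
  have hprod : lamP a b ^ (n - m) ∣ (pullΔ cn - qP * pullΔ cn1) * (pullΔ cn + qP * pullΔ cn1) :=
    ⟨pullΔ γ * C (c ^ (n - m)) * lamQ a b ^ (n - m), by linear_combination -heq2⟩
  have hndA : ¬ lamP a b ∣ pullΔ cn := by
    intro hdvd
    exact hl1 (hl ▸ l_dvd_of_ell_dvd hc (lam_dvd_imp hab hdvd))
  have hndB : ¬ lamP a b ∣ pullΔ cn1 := by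
    intro hdvd
    exact hl2 (hl ▸ l_dvd_of_ell_dvd hc (lam_dvd_imp hab hdvd))
  by_cases hP2 : lamP a b ∣ (pullΔ cn + qP * pullΔ cn1)
  · -- second factor divisible: show first is not, get λ^k ∣ second, use −cn1
    have hnd1 : ¬ lamP a b ∣ (pullΔ cn - qP * pullΔ cn1) := by
      intro h1
      have h2A : lamP a b ∣ 2 * pullΔ cn := by
        have := dvd_add h1 hP2
        have heqA : (pullΔ cn - qP * pullΔ cn1) + (pullΔ cn + qP * pullΔ cn1)
            = 2 * pullΔ cn := by ring
        rwa [heqA] at this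
      have hunit2 : IsUnit (2 : MvPolynomial (Fin 4) ℂ) := by
        apply IsUnit.of_mul_eq_one (C 2⁻¹)
        rw [show (2 : MvPolynomial (Fin 4) ℂ) = C 2 from (map_ofNat C 2).symm, ← C_mul]
        norm_num
      rcases hprime.2.2 _ _ h2A with hu | hA
      · exact hprime.not_unit (isUnit_of_dvd_unit hu hunit2)
      · exact hndA hA
    have hdvd2 : lamP a b ^ (n - m) ∣ (pullΔ cn + qP * pullΔ cn1) :=
      hprime.pow_dvd_of_dvd_mul_left _ hnd1 hprod
    have hcn1' : (-cn1).IsHomogeneous (n - 1) := hcn1.neg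
    apply main_aux m n hm hmn γ hγ0 c a b hc hab cn (-cn1) hcn hcn1'
    · have hpn : pullΔ (-cn1) = -(pullΔ cn1) := by
        unfold pullΔ
        exact map_neg _ _
      rw [hpn]
      linear_combination heq2
    · have hpn : pullΔ (-cn1) = -(pullΔ cn1) := by
        unfold pullΔ
        exact map_neg _ _
      rw [hpn]
      have : pullΔ cn - qP * -pullΔ cn1 = pullΔ cn + qP * pullΔ cn1 := by ring
      rw [this]
      exact hdvd2
  · have hdvd1 : lamP a b ^ (n - m) ∣ (pullΔ cn - qP * pullΔ cn1) :=
      hprime.pow_dvd_of_dvd_mul_right _ hP2 hprod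
    exact main_aux m n hm hmn γ hγ0 c a b hc hab cn cn1 hcn hcn1 heq2 hdvd1
end

section
/- Let P₁,…,P₇ be seven distinct points of ℙ¹(ℂ)×ℙ¹(ℂ) in general position. Then the complex vector space of bihomogeneous forms of bidegree (2,2) vanishing at all seven points has dimension exactly 2. -/
open MvPolynomial
open scoped Classical

noncomputable section
namespace Seven
open Submodule Module

abbrev V4 := Fin 4 → ℂ

lemma range_vec3 (x y z : V4) : Set.range ![x, y, z] = {x, y, z} := by
  ext w
  simp only [Matrix.range_cons, Matrix.range_empty, Set.union_empty, Set.mem_insert_iff,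
    Set.mem_singleton_iff, Set.mem_union]

lemma top_not_le_span3 (x y z : V4) : ¬ ((⊤ : Submodule ℂ V4) ≤ span ℂ {x, y, z}) := by
  intro h
  have h1 : finrank ℂ (span ℂ ({x, y, z} : Set V4)) ≤ 3 := by
    have := finrank_range_le_card (R := ℂ) ![x, y, z]
    rw [Set.finrank, range_vec3] at this
    simpa using this
  have h2 : finrank ℂ (⊤ : Submodule ℂ V4) = 4 := by
    rw [finrank_top]; simp [finrank_pi]
  have := Submodule.finrank_mono h
  omega

lemma mem_span_triple {x a b c : V4} :
    x ∈ span ℂ ({a, b, c} : Set V4) ↔ ∃ r s t : ℂ, r • a + s • b + t • c = x := by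
  constructor
  · intro h
    rw [show ({a, b, c} : Set V4) = insert a {b, c} from rfl, Submodule.mem_span_insert] at h
    obtain ⟨r, z, hz, rfl⟩ := h
    rw [Submodule.mem_span_pair] at hz
    obtain ⟨s, t, rfl⟩ := hz
    exact ⟨r, s, t, by ring⟩
  · rintro ⟨r, s, t, rfl⟩
    refine add_mem (add_mem ?_ ?_) ?_ <;>
      exact smul_mem _ _ (subset_span (by simp))

lemma comb3_mem (a b c : V4) (r s t : ℂ) : r • a + s • b + t • c ∈ span ℂ ({a, b, c} : Set V4) :=
  mem_span_triple.mpr ⟨r, s, t, rfl⟩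

lemma five_in_three {s : Set V4} {x y z : V4} (htop : (⊤ : Submodule ℂ V4) ≤ span ℂ s)
    (hsub : s ⊆ (span ℂ {x, y, z} : Submodule ℂ V4)) : False :=
  top_not_le_span3 x y z (htop.trans (span_le.mpr hsub))

lemma solve3 {a b c x : V4} {r s t : ℂ} (h : r • a + s • b + t • c = x) (ht : t ≠ 0) :
    c ∈ span ℂ ({x, a, b} : Set V4) := by
  have hc : c = t⁻¹ • x + (-(t⁻¹ * r)) • a + (-(t⁻¹ * s)) • b := by
    rw [← h]
    funext i
    simp only [Pi.add_apply, Pi.smul_apply, smul_eq_mul, Pi.neg_apply]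
    field_simp
    ring
  rw [hc]
  exact comb3_mem _ _ _ _ _ _

lemma solve2 {a b x : V4} {r s : ℂ} (h : r • a + s • b = x) (hs : s ≠ 0) :
    b ∈ span ℂ ({x, a} : Set V4) := by
  have hb : b = s⁻¹ • x + (-(s⁻¹ * r)) • a := by
    rw [← h]
    funext i
    simp only [Pi.add_apply, Pi.smul_apply, smul_eq_mul, Pi.neg_apply]
    field_simp
    ring
  rw [hb]
  exact Submodule.mem_span_pair.mpr ⟨_, _, rfl⟩

lemma exists_dual {S : Set V4} {u : V4} (h : u ∉ span ℂ S) :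
    ∃ f : Module.Dual ℂ V4, f u ≠ 0 ∧ ∀ x ∈ S, f x = 0 := by
  obtain ⟨f, hfu, hf⟩ := (span ℂ S).exists_dual_map_eq_bot_of_notMem h inferInstance
  refine ⟨f, hfu, fun x hx => ?_⟩
  have : f x ∈ (span ℂ S).map f := ⟨x, subset_span hx, rfl⟩
  rwa [hf, Submodule.mem_bot] at this

lemma six_univ {p q a b c d : Fin 6} (hpq : p ≠ q) (hpa : p ≠ a) (hpb : p ≠ b) (hpc : p ≠ c)
    (hpd : p ≠ d) (hqa : q ≠ a) (hqb : q ≠ b) (hqc : q ≠ c) (hqd : q ≠ d) (hab : a ≠ b)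
    (hac : a ≠ c) (had : a ≠ d) (hbc : b ≠ c) (hbd : b ≠ d) (hcd : c ≠ d) :
    ({p, q, a, b, c, d} : Finset (Fin 6)) = Finset.univ := by
  apply Finset.eq_univ_of_card
  rw [Finset.card_insert_of_notMem (by simp [hpq, hpa, hpb, hpc, hpd]),
    Finset.card_insert_of_notMem (by simp [hqa, hqb, hqc, hqd]),
    Finset.card_insert_of_notMem (by simp [hab, hac, had]),
    Finset.card_insert_of_notMem (by simp [hbc, hbd]),
    Finset.card_insert_of_notMem (by simp [hcd])]
  simp

lemma union_univ6 {p q a b c d : Fin 6} (hpq : p ≠ q) (hpa : p ≠ a) (hpb : p ≠ b) (hpc : p ≠ c)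
    (hpd : p ≠ d) (hqa : q ≠ a) (hqb : q ≠ b) (hqc : q ≠ c) (hqd : q ≠ d) (hab : a ≠ b)
    (hac : a ≠ c) (had : a ≠ d) (hbc : b ≠ c) (hbd : b ≠ d) (hcd : c ≠ d) :
    ({p, a, c} : Finset (Fin 6)) ∪ ({q, b, d} : Finset (Fin 6)) = Finset.univ := by
  have h := six_univ hpq hpa hpb hpc hpd hqa hqb hqc hqd hab hac had hbc hbd hcd
  apply Finset.eq_univ_of_forall
  intro x
  have hx := Finset.eq_univ_iff_forall.mp h x
  simp only [Finset.mem_insert, Finset.mem_singleton, Finset.mem_union] at hx ⊢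
  tauto

lemma image_finset3 (v : Fin 6 → V4) (i j k : Fin 6) :
    v '' ↑({i, j, k} : Finset (Fin 6)) = ({v i, v j, v k} : Set V4) := by
  simp [Set.image_insert_eq]


lemma set3_1 (x y z : V4) : ({x, y, z} : Set V4) = {x, z, y} := by ext w; simp; tauto
lemma set3_2 (x y z : V4) : ({x, y, z} : Set V4) = {y, x, z} := by ext w; simp; tauto
lemma set3_3 (x y z : V4) : ({x, y, z} : Set V4) = {y, z, x} := by ext w; simp; tauto
lemma set3_4 (x y z : V4) : ({x, y, z} : Set V4) = {z, x, y} := by ext w; simp; tauto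

lemma core (u : V4) (v : Fin 6 → V4)
    (h5v : ∀ i1 i2 i3 i4 i5 : Fin 6, i1 ≠ i2 → i1 ≠ i3 → i1 ≠ i4 → i1 ≠ i5 → i2 ≠ i3 →
      i2 ≠ i4 → i2 ≠ i5 → i3 ≠ i4 → i3 ≠ i5 → i4 ≠ i5 →
      (⊤ : Submodule ℂ V4) ≤ span ℂ {v i1, v i2, v i3, v i4, v i5})
    (h5u : ∀ i1 i2 i3 i4 : Fin 6, i1 ≠ i2 → i1 ≠ i3 → i1 ≠ i4 → i2 ≠ i3 → i2 ≠ i4 → i3 ≠ i4 →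
      (⊤ : Submodule ℂ V4) ≤ span ℂ {u, v i1, v i2, v i3, v i4})
    (hnp : ∀ i, u ∉ span ℂ ({v i} : Set V4)) :
    ∃ S1 S2 : Finset (Fin 6), S1 ∪ S2 = Finset.univ ∧
      u ∉ span ℂ (v '' ↑S1) ∧ u ∉ span ℂ (v '' ↑S2) := by
  by_cases hbp : ∃ p q : Fin 6, p ≠ q ∧ u ∈ span ℂ ({v p, v q} : Set V4)
  · -- Case A : there is a "bad pair"
    obtain ⟨p, q, hpq, hu⟩ := hbp
    -- extract the four other indices
    have hcard : ({p, q}ᶜ : Finset (Fin 6)).card = 4 := by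
      rw [Finset.card_compl, Finset.card_insert_of_notMem (by simp [hpq]),
        Finset.card_singleton]
      rfl
    obtain ⟨a, ha⟩ : ∃ x, x ∈ ({p, q}ᶜ : Finset (Fin 6)) :=
      Finset.card_pos.mp (by omega)
    have hcard3 : (({p, q}ᶜ : Finset (Fin 6)).erase a).card = 3 := by
      rw [Finset.card_erase_of_mem ha, hcard]
    obtain ⟨b, c, d, hbc', hbd', hcd', heq⟩ := Finset.card_eq_three.mp hcard3
    have hbmem : b ∈ (({p, q}ᶜ : Finset (Fin 6)).erase a) := by rw [heq]; simp
    have hcmem : c ∈ (({p, q}ᶜ : Finset (Fin 6)).erase a) := by rw [heq]; simp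
    have hdmem : d ∈ (({p, q}ᶜ : Finset (Fin 6)).erase a) := by rw [heq]; simp
    have hap : a ≠ p := by intro h; rw [h] at ha; simp at ha
    have haq : a ≠ q := by intro h; rw [h] at ha; simp at ha
    have hba : b ≠ a := Finset.ne_of_mem_erase hbmem
    have hca : c ≠ a := Finset.ne_of_mem_erase hcmem
    have hda : d ≠ a := Finset.ne_of_mem_erase hdmem
    have hbp' : b ≠ p := by
      have := Finset.mem_of_mem_erase hbmem; intro h; rw [h] at this; simp at this
    have hbq : b ≠ q := by
      have := Finset.mem_of_mem_erase hbmem; intro h; rw [h] at this; simp at this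
    have hcp : c ≠ p := by
      have := Finset.mem_of_mem_erase hcmem; intro h; rw [h] at this; simp at this
    have hcq : c ≠ q := by
      have := Finset.mem_of_mem_erase hcmem; intro h; rw [h] at this; simp at this
    have hdp : d ≠ p := by
      have := Finset.mem_of_mem_erase hdmem; intro h; rw [h] at this; simp at this
    have hdq : d ≠ q := by
      have := Finset.mem_of_mem_erase hdmem; intro h; rw [h] at this; simp at this
    -- A1 : no other vector lies in the plane of the bad pair
    have A1 : ∀ x y : Fin 6, x ≠ p → x ≠ q → y ≠ p → y ≠ q → y ≠ x →
        v x ∈ span ℂ ({v p, v q} : Set V4) → False := by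
      intro x y hxp hxq hyp hyq hyx hx
      refine five_in_three (x := v p) (y := v q) (z := v y)
        (h5u p q x y hpq hxp.symm hyp.symm hxq.symm hyq.symm hyx.symm) ?_
      rintro w hw
      simp only [Set.mem_insert_iff, Set.mem_singleton_iff] at hw
      rcases hw with rfl | rfl | rfl | rfl | rfl
      · exact span_mono (by intro z hz; simp at hz ⊢; tauto) hu
      · exact subset_span (by simp)
      · exact subset_span (by simp)
      · exact span_mono (by intro z hz; simp at hz ⊢; tauto) hx
      · exact subset_span (by simp)
    -- the relation E
    have A2 : ∀ x α β : Fin 6, (x = p ∨ x = q) → α ≠ p → α ≠ q → β ≠ p → β ≠ q → β ≠ α →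
        u ∈ span ℂ ({v x, v α, v β} : Set V4) →
        v β ∈ span ℂ ({v p, v q, v α} : Set V4) := by
      intro x α β hx hαp hαq hβp hβq hβα hu2
      obtain ⟨r1, r2, r3, hr⟩ := mem_span_triple.mp hu2
      have hvx : v x ∈ span ℂ ({v p, v q} : Set V4) := by
        rcases hx with rfl | rfl
        · exact subset_span (by simp)
        · exact subset_span (by simp)
      by_cases h3 : r3 = 0
      · exfalso
        have hr2 : r2 ≠ 0 := by
          intro h2
          apply hnp x
          rw [mem_span_singleton]
          exact ⟨r1, by rw [← hr, h2, h3]; simp⟩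
        have heq2 : r1 • v x + r2 • v α = u := by
          rw [← hr, h3]; simp
        have hα : v α ∈ span ℂ ({u, v x} : Set V4) := solve2 heq2 hr2
        refine A1 α β hαp hαq hβp hβq hβα ?_
        refine span_le.mpr ?_ hα
        rintro w hw
        simp only [Set.mem_insert_iff, Set.mem_singleton_iff] at hw
        rcases hw with rfl | rfl
        · exact hu
        · exact hvx
      · have hβ : v β ∈ span ℂ ({u, v x, v α} : Set V4) := solve3 hr h3
        refine span_le.mpr ?_ hβ
        rintro w hw
        simp only [Set.mem_insert_iff, Set.mem_singleton_iff] at hw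
        rcases hw with rfl | rfl | rfl
        · exact span_mono (by intro z hz; simp at hz ⊢; tauto) hu
        · exact span_mono (by intro z hz; simp at hz ⊢; tauto) hvx
        · exact subset_span (by simp)
    have A3 : ∀ α β : Fin 6, α ≠ p → α ≠ q → β ≠ p → β ≠ q → α ≠ β →
        v β ∈ span ℂ ({v p, v q, v α} : Set V4) →
        v α ∈ span ℂ ({v p, v q, v β} : Set V4) := by
      intro α β hαp hαq hβp hβq hαβ hE
      obtain ⟨r1, r2, r3, hr⟩ := mem_span_triple.mp hE
      have h3 : r3 ≠ 0 := by
        intro h3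
        refine A1 β α hβp hβq hαp hαq hαβ ?_
        rw [Submodule.mem_span_pair]
        exact ⟨r1, r2, by rw [← hr, h3]; simp⟩
      have := solve3 hr h3
      rwa [set3_3] at this
    have A4 : ∀ α β γ : Fin 6, α ≠ p → α ≠ q → β ≠ p → β ≠ q → γ ≠ p → γ ≠ q →
        α ≠ β → α ≠ γ → β ≠ γ →
        v β ∈ span ℂ ({v p, v q, v α} : Set V4) →
        v γ ∈ span ℂ ({v p, v q, v α} : Set V4) → False := by
      intro α β γ hαp hαq hβp hβq hγp hγq hαβ hαγ hβγ hβE hγE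
      refine five_in_three (x := v p) (y := v q) (z := v α)
        (h5v p q α β γ hpq hαp.symm hβp.symm hγp.symm hαq.symm hβq.symm hγq.symm hαβ hαγ hβγ) ?_
      rintro w hw
      simp only [Set.mem_insert_iff, Set.mem_singleton_iff] at hw
      rcases hw with rfl | rfl | rfl | rfl | rfl
      · exact subset_span (by simp)
      · exact subset_span (by simp)
      · exact subset_span (by simp)
      · exact hβE
      · exact hγE
    -- final choice of pairing
    have final : ∀ α β γ δ : Fin 6, α ≠ p → α ≠ q → β ≠ p → β ≠ q → γ ≠ p → γ ≠ q →
        δ ≠ p → δ ≠ q → α ≠ β → α ≠ γ → α ≠ δ → β ≠ γ → β ≠ δ → γ ≠ δ →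
        ¬ v γ ∈ span ℂ ({v p, v q, v α} : Set V4) →
        ¬ v δ ∈ span ℂ ({v p, v q, v β} : Set V4) →
        ∃ S1 S2 : Finset (Fin 6), S1 ∪ S2 = Finset.univ ∧
          u ∉ span ℂ (v '' ↑S1) ∧ u ∉ span ℂ (v '' ↑S2) := by
      intro α β γ δ hαp hαq hβp hβq hγp hγq hδp hδq hαβ hαγ hαδ hβγ hβδ hγδ hEαγ hEβδ
      refine ⟨{p, α, γ}, {q, β, δ}, ?_, ?_, ?_⟩
      · exact union_univ6 hpq hαp.symm hβp.symm hγp.symm hδp.symm hαq.symm hβq.symm hγq.symm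
          hδq.symm hαβ hαγ hαδ hβγ hβδ hγδ
      · rw [image_finset3]
        intro h
        exact hEαγ (A2 p α γ (Or.inl rfl) hαp hαq hγp hγq (Ne.symm hαγ) h)
      · rw [image_finset3]
        intro h
        exact hEβδ (A2 q β δ (Or.inr rfl) hβp hβq hδp hδq (Ne.symm hβδ) h)
    by_cases hEab : v b ∈ span ℂ ({v p, v q, v a} : Set V4)
    · have hEac : ¬ v c ∈ span ℂ ({v p, v q, v a} : Set V4) := fun h =>
        A4 a b c hap haq hbp' hbq hcp hcq hba.symm hca.symm hbc' hEab h
      have hEbd : ¬ v d ∈ span ℂ ({v p, v q, v b} : Set V4) := fun h =>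
        A4 b a d hbp' hbq hap haq hdp hdq hba hbd' hda.symm
          (A3 a b hap haq hbp' hbq hba.symm hEab) h
      exact final a b c d hap haq hbp' hbq hcp hcq hdp hdq hba.symm hca.symm hda.symm
        hbc' hbd' hcd' hEac hEbd
    · by_cases hEcd : v d ∈ span ℂ ({v p, v q, v c} : Set V4)
      · have hEac : ¬ v c ∈ span ℂ ({v p, v q, v a} : Set V4) := fun h =>
          A4 c a d hcp hcq hap haq hdp hdq hca hcd' hda.symm
            (A3 a c hap haq hcp hcq hca.symm h) hEcd
        have hEbd : ¬ v d ∈ span ℂ ({v p, v q, v b} : Set V4) := fun h =>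
          A4 d b c hdp hdq hbp' hbq hcp hcq hbd'.symm hcd'.symm hbc'
            (A3 b d hbp' hbq hdp hdq hbd' h) (A3 c d hcp hcq hdp hdq hcd' hEcd)
        exact final a b c d hap haq hbp' hbq hcp hcq hdp hdq hba.symm hca.symm hda.symm
          hbc' hbd' hcd' hEac hEbd
      · exact final a c b d hap haq hcp hcq hbp' hbq hdp hdq hca.symm hba.symm hda.symm
          hbc'.symm hcd' hbd' hEab hEcd
  · -- Case B : no bad pair
    push_neg at hbp
    have L2B : ∀ i j k l : Fin 6, i ≠ j → i ≠ k → i ≠ l → j ≠ k → j ≠ l → k ≠ l →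
        u ∈ span ℂ ({v i, v j, v k} : Set V4) →
        u ∈ span ℂ ({v i, v j, v l} : Set V4) → False := by
      intro i j k l hij hik hil hjk hjl hkl hk hl
      obtain ⟨r1, r2, r3, hr⟩ := mem_span_triple.mp hk
      have h3 : r3 ≠ 0 := by
        intro h3
        refine hbp i j hij ?_
        rw [Submodule.mem_span_pair]
        exact ⟨r1, r2, by rw [← hr, h3]; simp⟩
      obtain ⟨s1, s2, s3, hs⟩ := mem_span_triple.mp hl
      have h3' : s3 ≠ 0 := by
        intro h3'
        refine hbp i j hij ?_
        rw [Submodule.mem_span_pair]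
        exact ⟨s1, s2, by rw [← hs, h3']; simp⟩
      have hk' : v k ∈ span ℂ ({u, v i, v j} : Set V4) := solve3 hr h3
      have hl' : v l ∈ span ℂ ({u, v i, v j} : Set V4) := solve3 hs h3'
      refine five_in_three (x := u) (y := v i) (z := v j)
        (h5u i j k l hij hik hil hjk hjl hkl) ?_
      rintro w hw
      simp only [Set.mem_insert_iff, Set.mem_singleton_iff] at hw
      rcases hw with rfl | rfl | rfl | rfl | rfl
      · exact subset_span (by simp)
      · exact subset_span (by simp)
      · exact subset_span (by simp)
      · exact hk'
      · exact hl'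
    by_cases h012 : u ∈ span ℂ ({v 0, v 1, v 2} : Set V4)
    · by_cases h245 : u ∈ span ℂ ({v 2, v 4, v 5} : Set V4)
      · by_cases h235 : u ∈ span ℂ ({v 2, v 3, v 5} : Set V4)
        · exfalso
          refine L2B 2 5 4 3 (by decide) (by decide) (by decide) (by decide) (by decide)
            (by decide) ?_ ?_
          · rwa [set3_1] at h245
          · rwa [set3_1] at h235
        · refine ⟨{0, 1, 4}, {2, 3, 5}, by decide, ?_, ?_⟩
          · rw [image_finset3]
            intro h
            exact L2B 0 1 2 4 (by decide) (by decide) (by decide) (by decide) (by decide)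
              (by decide) h012 h
          · rw [image_finset3]
            exact h235
      · refine ⟨{0, 1, 3}, {2, 4, 5}, by decide, ?_, ?_⟩
        · rw [image_finset3]
          intro h
          exact L2B 0 1 2 3 (by decide) (by decide) (by decide) (by decide) (by decide)
            (by decide) h012 h
        · rw [image_finset3]
          exact h245
    · by_cases h345 : u ∈ span ℂ ({v 3, v 4, v 5} : Set V4)
      · by_cases h125 : u ∈ span ℂ ({v 1, v 2, v 5} : Set V4)
        · by_cases h025 : u ∈ span ℂ ({v 0, v 2, v 5} : Set V4)
          · exfalso
            refine L2B 2 5 1 0 (by decide) (by decide) (by decide) (by decide) (by decide)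
              (by decide) ?_ ?_
            · rwa [set3_3] at h125
            · rwa [set3_3] at h025
          · refine ⟨{1, 3, 4}, {0, 2, 5}, by decide, ?_, ?_⟩
            · rw [image_finset3]
              intro h
              refine L2B 3 4 5 1 (by decide) (by decide) (by decide) (by decide) (by decide)
                (by decide) h345 ?_
              rwa [set3_3] at h
            · rw [image_finset3]
              exact h025
        · refine ⟨{0, 3, 4}, {1, 2, 5}, by decide, ?_, ?_⟩
          · rw [image_finset3]
            intro h
            refine L2B 3 4 5 0 (by decide) (by decide) (by decide) (by decide) (by decide)
              (by decide) h345 ?_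
            rwa [set3_3] at h
          · rw [image_finset3]
            exact h125
      · exact ⟨{0, 1, 2}, {3, 4, 5}, by decide, by rw [image_finset3]; exact h012,
          by rw [image_finset3]; exact h345⟩



def σseg (Q : P1C × P1C) : V4 :=
  ![Q.1.rep 0 * Q.2.rep 0, Q.1.rep 0 * Q.2.rep 1, Q.1.rep 1 * Q.2.rep 0, Q.1.rep 1 * Q.2.rep 1]

def Lpoly (l : V4) : MvPolynomial (Fin 4) ℂ :=
  C (l 0) * (X 0 * X 2) + C (l 1) * (X 0 * X 3) + C (l 2) * (X 1 * X 2) + C (l 3) * (X 1 * X 3)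

lemma bihom_term (c : ℂ) (i j : Fin 4) (m : ℕ × ℕ) (hm : biwt i + biwt j = m) :
    MvPolynomial.IsWeightedHomogeneous biwt (MvPolynomial.C c * (MvPolynomial.X i * MvPolynomial.X j) : MvPolynomial (Fin 4) ℂ) m := by
  have h := (MvPolynomial.isWeightedHomogeneous_C biwt c).mul
    ((MvPolynomial.isWeightedHomogeneous_X ℂ biwt i).mul (MvPolynomial.isWeightedHomogeneous_X ℂ biwt j))
  rwa [zero_add, hm] at h

lemma bihom_Lpoly (l : V4) : Bihom (Lpoly l) 1 1 := by
  have h0 : biwt (0 : Fin 4) = (1,0) := rfl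
  have h1 : biwt (1 : Fin 4) = (1,0) := rfl
  have h2 : biwt (2 : Fin 4) = (0,1) := rfl
  have h3 : biwt (3 : Fin 4) = (0,1) := rfl
  refine MvPolynomial.IsWeightedHomogeneous.add (MvPolynomial.IsWeightedHomogeneous.add
    (MvPolynomial.IsWeightedHomogeneous.add ?_ ?_) ?_) ?_ <;>
    apply bihom_term <;> simp [h0, h1, h2, h3, Prod.ext_iff]

lemma evalPair_Lpoly (f : Module.Dual ℂ V4) (Q : P1C × P1C) :
    evalPair (Lpoly (fun i => f fun j => if i = j then 1 else 0)) Q = f (σseg Q) := by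
  rw [LinearMap.pi_apply_eq_sum_univ f (σseg Q), Fin.sum_univ_four]
  simp only [evalPair, Lpoly, pairRep, σseg, map_add, map_mul, MvPolynomial.eval_C,
    MvPolynomial.eval_X, Matrix.cons_val_zero, Matrix.cons_val_one, Matrix.head_cons,
    Matrix.cons_val_two, Matrix.tail_cons, Matrix.cons_val_three, smul_eq_mul]
  ring

lemma evalPair_mul (p q : MvPolynomial (Fin 4) ℂ) (Q : P1C × P1C) :
    evalPair (p * q) Q = evalPair p Q * evalPair q Q := by
  simp [evalPair]

lemma Lpoly_ne_zero {l : V4} (hl : l ≠ 0) : Lpoly l ≠ 0 := by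
  intro h
  apply hl
  have e0 := congrArg (MvPolynomial.eval ![1,0,1,0]) h
  have e1 := congrArg (MvPolynomial.eval ![1,0,0,1]) h
  have e2 := congrArg (MvPolynomial.eval ![0,1,1,0]) h
  have e3 := congrArg (MvPolynomial.eval ![0,1,0,1]) h
  simp only [Lpoly, map_add, map_mul, MvPolynomial.eval_C, MvPolynomial.eval_X, map_zero,
    Matrix.cons_val_zero, Matrix.cons_val_one, Matrix.head_cons, Matrix.cons_val_two,
    Matrix.tail_cons, Matrix.cons_val_three] at e0 e1 e2 e3
  ring_nf at e0 e1 e2 e3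
  funext i
  fin_cases i <;> simp_all

lemma σseg_ne_zero (Q : P1C × P1C) : σseg Q ≠ 0 := by
  obtain ⟨i, hi⟩ : ∃ i, Q.1.rep i ≠ 0 := by
    by_contra hc; push_neg at hc; exact Q.1.rep_nonzero (funext hc)
  obtain ⟨j, hj⟩ : ∃ j, Q.2.rep j ≠ 0 := by
    by_contra hc; push_neg at hc; exact Q.2.rep_nonzero (funext hc)
  intro h
  fin_cases i <;> fin_cases j
  · exact mul_ne_zero hi hj (by simpa [σseg] using congrFun h 0)
  · exact mul_ne_zero hi hj (by simpa [σseg] using congrFun h 1)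
  · exact mul_ne_zero hi hj (by simpa [σseg] using congrFun h 2)
  · exact mul_ne_zero hi hj (by simpa [σseg] using congrFun h 3)

lemma σseg_parallel {Q Q' : P1C × P1C} (h : σseg Q ∈ span ℂ ({σseg Q'} : Set V4)) :
    Q = Q' := by
  rw [mem_span_singleton] at h
  obtain ⟨t, ht⟩ := h
  have ht0 : t ≠ 0 := by
    rintro rfl
    exact σseg_ne_zero Q (by rw [← ht]; simp)
  have e : ∀ i j : Fin 2, Q.1.rep i * Q.2.rep j = t * (Q'.1.rep i * Q'.2.rep j) := by
    intro i j
    fin_cases i <;> fin_cases j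
    · simpa [σseg] using (congrFun ht 0).symm
    · simpa [σseg] using (congrFun ht 1).symm
    · simpa [σseg] using (congrFun ht 2).symm
    · simpa [σseg] using (congrFun ht 3).symm
  obtain ⟨i0, hi0⟩ : ∃ i, Q.1.rep i ≠ 0 := by
    by_contra hc; push_neg at hc; exact Q.1.rep_nonzero (funext hc)
  obtain ⟨j0, hj0⟩ : ∃ j, Q.2.rep j ≠ 0 := by
    by_contra hc; push_neg at hc; exact Q.2.rep_nonzero (funext hc)
  have hb'j0 : Q'.2.rep j0 ≠ 0 := by
    intro h0
    apply Q.1.rep_nonzero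
    funext i
    have := e i j0
    rw [h0] at this
    simp only [mul_zero] at this
    exact (mul_eq_zero.mp this).resolve_right hj0
  have ha'i0 : Q'.1.rep i0 ≠ 0 := by
    intro h0
    apply Q.2.rep_nonzero
    funext j
    have := e i0 j
    rw [h0] at this
    simp only [zero_mul, mul_zero] at this
    exact (mul_eq_zero.mp this).resolve_left hi0
  have h1 : Q.1 = Q'.1 := by
    conv_lhs => rw [← Projectivization.mk_rep Q.1]
    conv_rhs => rw [← Projectivization.mk_rep Q'.1]
    rw [Projectivization.mk_eq_mk_iff]
    refine ⟨Units.mk0 (t * Q'.2.rep j0 / Q.2.rep j0) (by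
      exact div_ne_zero (mul_ne_zero ht0 hb'j0) hj0), ?_⟩
    funext i
    have h1 := e i j0
    simp only [Units.smul_def, Units.val_mk0, Pi.smul_apply, smul_eq_mul]
    rw [div_mul_eq_mul_div, div_eq_iff hj0]
    linear_combination -h1
  have h2 : Q.2 = Q'.2 := by
    conv_lhs => rw [← Projectivization.mk_rep Q.2]
    conv_rhs => rw [← Projectivization.mk_rep Q'.2]
    rw [Projectivization.mk_eq_mk_iff]
    refine ⟨Units.mk0 (t * Q'.1.rep i0 / Q.1.rep i0) (by
      exact div_ne_zero (mul_ne_zero ht0 ha'i0) hi0), ?_⟩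
    funext j
    have h1 := e i0 j
    simp only [Units.smul_def, Units.val_mk0, Pi.smul_apply, smul_eq_mul]
    rw [div_mul_eq_mul_div, div_eq_iff hi0]
    linear_combination -h1
  exact Prod.ext h1 h2

lemma weight_biwt (d : Fin 4 →₀ ℕ) : Finsupp.weight biwt d = (d 0 + d 1, d 2 + d 3) := by
  rw [Finsupp.weight_apply, Finsupp.sum_fintype _ _ (fun i => by simp), Fin.sum_univ_four]
  have b0 : biwt 0 = (1,0) := rfl
  have b1 : biwt 1 = (1,0) := rfl
  have b2 : biwt 2 = (0,1) := rfl
  have b3 : biwt 3 = (0,1) := rfl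
  rw [b0, b1, b2, b3]
  simp [Prod.ext_iff]

def expF (k : Fin 3 × Fin 3) : Fin 4 →₀ ℕ :=
  Finsupp.equivFunOnFinite.symm ![k.1.val, 2 - k.1.val, k.2.val, 2 - k.2.val]

lemma expF_apply (k : Fin 3 × Fin 3) :
    expF k 0 = k.1.val ∧ expF k 1 = 2 - k.1.val ∧ expF k 2 = k.2.val ∧
      expF k 3 = 2 - k.2.val := by
  refine ⟨?_, ?_, ?_, ?_⟩ <;> simp [expF]

lemma weight_expF (k : Fin 3 × Fin 3) : Finsupp.weight biwt (expF k) = ((2, 2) : ℕ × ℕ) := by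
  obtain ⟨h0, h1, h2, h3⟩ := expF_apply k
  rw [weight_biwt, h0, h1, h2, h3, Prod.ext_iff]
  have := k.1.isLt
  have := k.2.isLt
  constructor <;> simp <;> omega

lemma V22_eq : (weightedHomogeneousSubmodule ℂ biwt ((2,2) : ℕ × ℕ)) =
    span ℂ (Set.range fun k : Fin 3 × Fin 3 => (monomial (expF k) (1:ℂ))) := by
  apply le_antisymm
  · intro p hp
    rw [mem_weightedHomogeneousSubmodule] at hp
    rw [← p.support_sum_monomial_coeff]
    apply Submodule.sum_mem
    intro d hd
    have hw := hp (MvPolynomial.mem_support_iff.mp hd)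
    rw [weight_biwt, Prod.ext_iff] at hw
    obtain ⟨h01, h23⟩ := hw
    simp only at h01 h23
    have hd0 : d 0 < 3 := by omega
    have hd2 : d 2 < 3 := by omega
    have hde : d = expF (⟨d 0, hd0⟩, ⟨d 2, hd2⟩) := by
      obtain ⟨h0, h1, h2, h3⟩ := expF_apply (⟨d 0, hd0⟩, ⟨d 2, hd2⟩)
      apply Finsupp.ext
      intro i
      fin_cases i
      · show d 0 = expF (⟨d 0, hd0⟩, ⟨d 2, hd2⟩) 0
        rw [h0]
      · show d 1 = expF (⟨d 0, hd0⟩, ⟨d 2, hd2⟩) 1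
        rw [h1]; simp; omega
      · show d 2 = expF (⟨d 0, hd0⟩, ⟨d 2, hd2⟩) 2
        rw [h2]
      · show d 3 = expF (⟨d 0, hd0⟩, ⟨d 2, hd2⟩) 3
        rw [h3]; simp; omega
    have hmono : (monomial d (coeff d p) : MvPolynomial (Fin 4) ℂ)
        = coeff d p • monomial (expF (⟨d 0, hd0⟩, ⟨d 2, hd2⟩)) 1 := by
      rw [MvPolynomial.smul_monomial, smul_eq_mul, mul_one, ← hde]
    rw [hmono]
    exact smul_mem _ _ (subset_span ⟨_, rfl⟩)
  · rw [span_le]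
    rintro w ⟨k, rfl⟩
    rw [SetLike.mem_coe, mem_weightedHomogeneousSubmodule]
    exact isWeightedHomogeneous_monomial _ _ _ (weight_expF k)

lemma expF_injective : Function.Injective expF := by
  intro k l h
  obtain ⟨h0, _, h2, _⟩ := expF_apply k
  obtain ⟨g0, _, g2, _⟩ := expF_apply l
  have e0 : k.1.val = l.1.val := by rw [← h0, ← g0, h]
  have e2 : k.2.val = l.2.val := by rw [← h2, ← g2, h]
  exact Prod.ext (Fin.ext e0) (Fin.ext e2)

lemma finrank_V22 :
    finrank ℂ (weightedHomogeneousSubmodule ℂ biwt ((2,2) : ℕ × ℕ)) = 9 := by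
  rw [V22_eq]
  have hli : LinearIndependent ℂ (fun k : Fin 3 × Fin 3 => (monomial (expF k) (1:ℂ))) := by
    have hb := (MvPolynomial.basisMonomials (Fin 4) ℂ).linearIndependent
    have := hb.comp expF expF_injective
    rw [MvPolynomial.coe_basisMonomials] at this
    exact this
  rw [finrank_span_eq_card hli]
  simp

lemma card_five {j1 j2 j3 j4 j5 : Fin 7} (h12 : j1 ≠ j2) (h13 : j1 ≠ j3) (h14 : j1 ≠ j4)
    (h15 : j1 ≠ j5) (h23 : j2 ≠ j3) (h24 : j2 ≠ j4) (h25 : j2 ≠ j5) (h34 : j3 ≠ j4)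
    (h35 : j3 ≠ j5) (h45 : j4 ≠ j5) : ({j1, j2, j3, j4, j5} : Finset (Fin 7)).card = 5 := by
  rw [Finset.card_insert_of_notMem (by simp [h12, h13, h14, h15]),
    Finset.card_insert_of_notMem (by simp [h23, h24, h25]),
    Finset.card_insert_of_notMem (by simp [h34, h35]),
    Finset.card_insert_of_notMem (by simp [h45]), Finset.card_singleton]

end Seven

end

theorem dim_bidegree_two_two_through_seven_points (P : Fin 7 → P1C × P1C)
    (hgen : GenPosP1P1 P) :
    Module.finrank ℂ ↥(biVanish 2 2 (Set.range P)) = 2 := by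
  classical
  obtain ⟨hPinj, -, -, hgen4⟩ := hgen
  -- Step 1 : any five of the Segre vectors span ℂ⁴
  have spanTop5 : ∀ j1 j2 j3 j4 j5 : Fin 7, j1 ≠ j2 → j1 ≠ j3 → j1 ≠ j4 → j1 ≠ j5 →
      j2 ≠ j3 → j2 ≠ j4 → j2 ≠ j5 → j3 ≠ j4 → j3 ≠ j5 → j4 ≠ j5 →
      (⊤ : Submodule ℂ Seven.V4) ≤ Submodule.span ℂ
        {Seven.σseg (P j1), Seven.σseg (P j2), Seven.σseg (P j3), Seven.σseg (P j4),
          Seven.σseg (P j5)} := by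
    intro j1 j2 j3 j4 j5 h12 h13 h14 h15 h23 h24 h25 h34 h35 h45
    by_contra htop
    have hex : ∃ w : Seven.V4, w ∉ Submodule.span ℂ
        {Seven.σseg (P j1), Seven.σseg (P j2), Seven.σseg (P j3), Seven.σseg (P j4),
          Seven.σseg (P j5)} := by
      by_contra hc
      push_neg at hc
      exact htop fun w _ => hc w
    obtain ⟨w, hw⟩ := hex
    obtain ⟨f, hfw, hf⟩ := Seven.exists_dual hw
    have hl : (fun i => f fun j => if i = j then 1 else 0) ≠ (0 : Seven.V4) := by
      intro h0
      apply hfw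
      rw [LinearMap.pi_apply_eq_sum_univ f w]
      have hz : ∀ i : Fin 4, f (fun j => if i = j then 1 else 0) = 0 := fun i =>
        congrFun h0 i
      simp [hz]
    refine hgen4 _ (Seven.Lpoly_ne_zero hl) (Seven.bihom_Lpoly _) {j1, j2, j3, j4, j5}
      (Seven.card_five h12 h13 h14 h15 h23 h24 h25 h34 h35 h45) ?_
    intro i hi
    simp only [Finset.mem_insert, Finset.mem_singleton] at hi
    rcases hi with rfl | rfl | rfl | rfl | rfl <;>
      rw [Seven.evalPair_Lpoly] <;> exact hf _ (by simp)
  -- Step 2 : for each point, a (2,2)-form vanishing at the other six but not at it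
  have key : ∀ i0 : Fin 7, ∃ g : MvPolynomial (Fin 4) ℂ,
      g ∈ weightedHomogeneousSubmodule ℂ biwt ((2,2) : ℕ × ℕ) ∧
      (∀ j : Fin 7, j ≠ i0 → evalPair g (P j) = 0) ∧ evalPair g (P i0) ≠ 0 := by
    intro i0
    have hne : ∀ k : Fin 6, i0.succAbove k ≠ i0 := fun k => Fin.succAbove_ne i0 k
    have hinj : Function.Injective i0.succAbove := Fin.succAbove_right_injective
    obtain ⟨S1, S2, hunion, h1, h2⟩ := Seven.core (Seven.σseg (P i0))
      (fun k => Seven.σseg (P (i0.succAbove k)))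
      (fun i1 i2 i3 i4 i5 h12 h13 h14 h15 h23 h24 h25 h34 h35 h45 =>
        spanTop5 _ _ _ _ _ (fun h => h12 (hinj h)) (fun h => h13 (hinj h))
          (fun h => h14 (hinj h)) (fun h => h15 (hinj h)) (fun h => h23 (hinj h))
          (fun h => h24 (hinj h)) (fun h => h25 (hinj h)) (fun h => h34 (hinj h))
          (fun h => h35 (hinj h)) (fun h => h45 (hinj h)))
      (fun i1 i2 i3 i4 h12 h13 h14 h23 h24 h34 =>
        spanTop5 i0 _ _ _ _ (Ne.symm (hne i1)) (Ne.symm (hne i2)) (Ne.symm (hne i3))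
          (Ne.symm (hne i4)) (fun h => h12 (hinj h)) (fun h => h13 (hinj h))
          (fun h => h14 (hinj h)) (fun h => h23 (hinj h)) (fun h => h24 (hinj h))
          (fun h => h34 (hinj h)))
      (fun k hk => hne k ((hPinj (Seven.σseg_parallel hk)).symm))
    obtain ⟨f1, hf1u, hf1⟩ := Seven.exists_dual h1
    obtain ⟨f2, hf2u, hf2⟩ := Seven.exists_dual h2
    refine ⟨Seven.Lpoly (fun i => f1 fun j => if i = j then 1 else 0) *
      Seven.Lpoly (fun i => f2 fun j => if i = j then 1 else 0), ?_, ?_, ?_⟩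
    · rw [mem_weightedHomogeneousSubmodule]
      have hb := (Seven.bihom_Lpoly (fun i => f1 fun j => if i = j then 1 else 0)).mul
        (Seven.bihom_Lpoly (fun i => f2 fun j => if i = j then 1 else 0))
      have h22 : ((1,1) : ℕ × ℕ) + (1,1) = (2,2) := rfl
      rw [← h22]
      exact hb
    · intro j hj
      obtain ⟨k, rfl⟩ := Fin.exists_succAbove_eq hj
      rw [Seven.evalPair_mul, Seven.evalPair_Lpoly, Seven.evalPair_Lpoly]
      have hk : k ∈ S1 ∨ k ∈ S2 := by
        have hk' : k ∈ S1 ∪ S2 := by rw [hunion]; exact Finset.mem_univ k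
        exact Finset.mem_union.mp hk'
      rcases hk with hk | hk
      · rw [hf1 _ ⟨k, Finset.mem_coe.mpr hk, rfl⟩, zero_mul]
      · rw [hf2 _ ⟨k, Finset.mem_coe.mpr hk, rfl⟩, mul_zero]
    · rw [Seven.evalPair_mul, Seven.evalPair_Lpoly, Seven.evalPair_Lpoly]
      exact mul_ne_zero hf1u hf2u
  -- Step 3 : rank-nullity
  set Vh := weightedHomogeneousSubmodule ℂ biwt ((2,2) : ℕ × ℕ) with hVhdef
  have hVfin : FiniteDimensional ℂ Vh := by
    rw [hVhdef, Seven.V22_eq]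
    exact FiniteDimensional.span_of_finite ℂ (Set.finite_range _)
  set Φ : MvPolynomial (Fin 4) ℂ →ₗ[ℂ] (Fin 7 → ℂ) :=
    LinearMap.pi (fun i => evalLin (pairRep (P i))) with hΦdef
  have hbV : biVanish 2 2 (Set.range P) = Vh ⊓ LinearMap.ker Φ := by
    unfold biVanish
    rw [iInf_range, hΦdef, LinearMap.ker_pi, hVhdef]
  set Φv := Φ.comp Vh.subtype with hΦv
  have hker : Submodule.comap Vh.subtype (Vh ⊓ LinearMap.ker Φ) = LinearMap.ker Φv := by
    rw [hΦv, LinearMap.ker_comp, Submodule.comap_inf, Submodule.comap_subtype_self,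
      top_inf_eq]
  have hrank : Module.finrank ℂ ↥(biVanish 2 2 (Set.range P))
      = Module.finrank ℂ (LinearMap.ker Φv) := by
    rw [hbV, ← hker]
    exact (Submodule.comapSubtypeEquivOfLe inf_le_left).finrank_eq.symm
  have hsurj : LinearMap.range Φv = ⊤ := by
    rw [← top_le_iff, ← (Pi.basisFun ℂ (Fin 7)).span_eq, Submodule.span_le]
    rintro w ⟨i, rfl⟩
    rw [Pi.basisFun_apply]
    obtain ⟨g, hgV, hg0, hgi⟩ := key i
    have hmem : Pi.single i (evalPair g (P i)) ∈ LinearMap.range Φv := by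
      refine ⟨⟨g, hgV⟩, ?_⟩
      funext j
      by_cases hji : j = i
      · subst hji
        rw [Pi.single_eq_same]
        rfl
      · rw [Pi.single_eq_of_ne hji]
        exact hg0 j hji
    have hsm := Submodule.smul_mem (LinearMap.range Φv) (evalPair g (P i))⁻¹ hmem
    rwa [← Pi.single_smul, smul_eq_mul, inv_mul_cancel₀ hgi] at hsm
  have hrn := LinearMap.finrank_range_add_finrank_ker Φv
  rw [hsurj, finrank_top] at hrn
  have h7 : Module.finrank ℂ (Fin 7 → ℂ) = 7 := by simp
  have h9 : Module.finrank ℂ Vh = 9 := Seven.finrank_V22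
  rw [h7, h9] at hrn
  rw [hrank]
  omega
end

section
/- Let P₁,…,P₈ be eight distinct points of ℙ¹(ℂ)×ℙ¹(ℂ) in general position. Then the complex vector space of bihomogeneous forms of bidegree (2,2) vanishing at all eight points has dimension 1 or 2. -/
open MvPolynomial
open scoped Classical

open Module Submodule

noncomputable section

def seg (Q : P1C × P1C) : Fin 4 → ℂ :=
  ![Q.1.rep 0 * Q.2.rep 0, Q.1.rep 0 * Q.2.rep 1,
    Q.1.rep 1 * Q.2.rep 0, Q.1.rep 1 * Q.2.rep 1]

lemma vec2_exists_ne {x : Fin 2 → ℂ} (hx : x ≠ 0) : ∃ j, x j ≠ 0 := by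
  by_contra h
  push_neg at h
  exact hx (funext fun i => by fin_cases i <;> simpa using h _)

/-- key extraction lemma for rank-one tensors -/
lemma tensor_eq {a b a' b' : Fin 2 → ℂ} (ha : a ≠ 0) (hb : b ≠ 0)
    (h : ∀ j k, a j * b k = a' j * b' k) :
    ∃ lam mu : ℂ, lam ≠ 0 ∧ mu ≠ 0 ∧ a' = lam • a ∧ b' = mu • b := by
  obtain ⟨j0, hj0⟩ := vec2_exists_ne ha
  obtain ⟨k0, hk0⟩ := vec2_exists_ne hb
  have hne : a' j0 * b' k0 ≠ 0 := by rw [← h]; exact mul_ne_zero hj0 hk0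
  have ha' : a' j0 ≠ 0 := left_ne_zero_of_mul hne
  have hb' : b' k0 ≠ 0 := right_ne_zero_of_mul hne
  refine ⟨b k0 / b' k0, a j0 / a' j0, div_ne_zero hk0 hb', div_ne_zero hj0 ha', ?_, ?_⟩
  · funext j
    have h1 := h j k0
    show a' j = (b k0 / b' k0) * a j
    field_simp
    linear_combination -h1
  · funext k
    have h1 := h j0 k
    show b' k = (a j0 / a' j0) * b k
    field_simp
    linear_combination -h1

lemma proj_eq_of_smul {Q Q' : P1C} {lam : ℂ} (hlam : lam ≠ 0)
    (h : Q'.rep = lam • Q.rep) : Q' = Q := by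
  conv_lhs => rw [← Q'.mk_rep]
  conv_rhs => rw [← Q.mk_rep]
  rw [Projectivization.mk_eq_mk_iff]
  exact ⟨Units.mk0 lam hlam, by simp [h, Units.smul_def]⟩

lemma seg_ne_zero (Q : P1C × P1C) : seg Q ≠ 0 := by
  obtain ⟨j, hj⟩ := vec2_exists_ne Q.1.rep_nonzero
  obtain ⟨k, hk⟩ := vec2_exists_ne Q.2.rep_nonzero
  intro h
  have h0 : Q.1.rep j * Q.2.rep k = 0 := by
    fin_cases j <;> fin_cases k
    · exact congrFun h 0
    · exact congrFun h 1
    · exact congrFun h 2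
    · exact congrFun h 3
  exact (mul_ne_zero hj hk) h0

open Fin.NatCast in
/-- proportional Segre vectors come from equal points -/
lemma point_eq_of_seg_smul {Q Q' : P1C × P1C} {mu : ℂ} (hmu : mu ≠ 0)
    (h : seg Q' = mu • seg Q) : Q' = Q := by
  have hcomp : ∀ j k, (mu • Q.1.rep) j * Q.2.rep k = Q'.1.rep j * Q'.2.rep k := by
    intro j k
    have : seg Q' (2 * j.val + k.val : ℕ) = mu * seg Q (2 * j.val + k.val : ℕ) := by
      have := congrFun h (2 * j.val + k.val : ℕ)
      simpa using this
    fin_cases j <;> fin_cases k <;>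
      simpa [seg, Pi.smul_apply, smul_eq_mul, mul_assoc, mul_left_comm, mul_comm] using this.symm
  obtain ⟨lam, nu, hlam, hnu, ha, hb⟩ :=
    tensor_eq (smul_ne_zero hmu Q.1.rep_nonzero) Q.2.rep_nonzero hcomp
  have e1 : Q'.1 = Q.1 := by
    refine proj_eq_of_smul (lam := lam * mu) (mul_ne_zero hlam hmu) ?_
    rw [ha, smul_smul]
  have e2 : Q'.2 = Q.2 := proj_eq_of_smul hnu hb
  exact Prod.ext e1 e2


lemma smul_eq_zero_imp {x : Fin 4 → ℂ} {t : ℂ} (hx : x ≠ 0) (h : t • x = 0) : t = 0 := by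
  by_contra ht
  exact hx (by simpa [ht] using congrArg (fun y => t⁻¹ • y) h)

lemma pair_indep {Q Q' : P1C × P1C} (hne : Q ≠ Q') :
    LinearIndependent ℂ ![seg Q, seg Q'] := by
  rw [LinearIndependent.pair_iff]
  intro s t hst
  by_cases hs : s = 0
  · subst hs
    have ht : t = 0 := smul_eq_zero_imp (seg_ne_zero Q') (by simpa using hst)
    exact ⟨rfl, ht⟩
  · exfalso
    by_cases ht : t = 0
    · subst ht
      exact hs (smul_eq_zero_imp (seg_ne_zero Q) (by simpa using hst))
    · apply hne
      refine (point_eq_of_seg_smul (mu := -s/t) (by simp [hs, ht]) ?_).symm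
      funext i
      have h1 := congrFun hst i
      simp only [Pi.add_apply, Pi.smul_apply, smul_eq_mul, Pi.zero_apply] at h1
      show seg Q' i = (-s/t) * seg Q i
      field_simp
      linear_combination h1

lemma dep_of_det {a a' : Fin 2 → ℂ} (ha : a ≠ 0)
    (h : a 0 * a' 1 - a 1 * a' 0 = 0) : ∃ lam : ℂ, a' = lam • a := by
  obtain ⟨j, hj⟩ := vec2_exists_ne ha
  fin_cases j
  · have hj' : a 0 ≠ 0 := hj
    refine ⟨a' 0 / a 0, funext fun k => ?_⟩
    fin_cases k
    · show a' 0 = a' 0 / a 0 * a 0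
      rw [div_mul_cancel₀ _ hj']
    · show a' 1 = a' 0 / a 0 * a 1
      rw [div_mul_eq_mul_div, eq_div_iff hj']
      linear_combination h
  · have hj' : a 1 ≠ 0 := hj
    refine ⟨a' 1 / a 1, funext fun k => ?_⟩
    fin_cases k
    · show a' 0 = a' 1 / a 1 * a 0
      rw [div_mul_eq_mul_div, eq_div_iff hj']
      linear_combination -h
    · show a' 1 = a' 1 / a 1 * a 1
      rw [div_mul_cancel₀ _ hj']

lemma triple_indep {Q1 Q2 Q3 : P1C × P1C} (h12 : Q1 ≠ Q2) (h13 : Q1 ≠ Q3) (h23 : Q2 ≠ Q3)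
    (hfib1 : ¬(Q1.1 = Q3.1 ∧ Q2.1 = Q3.1)) (hfib2 : ¬(Q1.2 = Q3.2 ∧ Q2.2 = Q3.2)) :
    LinearIndependent ℂ ![seg Q1, seg Q2, seg Q3] := by
  rw [Fintype.linearIndependent_iff]
  intro g hg
  have hsum : g 0 • seg Q1 + g 1 • seg Q2 + g 2 • seg Q3 = 0 := by
    rwa [Fin.sum_univ_three] at hg
  by_cases hg2 : g 2 = 0
  · have hpair := pair_indep h12
    rw [LinearIndependent.pair_iff] at hpair
    have := hpair (g 0) (g 1) (by rw [hg2] at hsum; simpa using hsum)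
    intro i; fin_cases i
    · exact this.1
    · exact this.2
    · exact hg2
  exfalso
  by_cases hg0 : g 0 = 0
  · have hpair := pair_indep h23
    rw [LinearIndependent.pair_iff] at hpair
    exact hg2 (hpair (g 1) (g 2) (by rw [hg0] at hsum; simpa using hsum)).2
  by_cases hg1 : g 1 = 0
  · have hpair := pair_indep h13
    rw [LinearIndependent.pair_iff] at hpair
    exact hg2 (hpair (g 0) (g 2) (by rw [hg1] at hsum; simpa using hsum)).2
  -- main case: all coefficients nonzero
  have e0 := congrFun hsum 0
  have e1 := congrFun hsum 1
  have e2 := congrFun hsum 2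
  have e3 := congrFun hsum 3
  simp only [Pi.add_apply, Pi.smul_apply, smul_eq_mul, Pi.zero_apply, seg,
    Matrix.cons_val_zero, Matrix.cons_val_one, Matrix.head_cons,
    Matrix.cons_val_two, Matrix.tail_cons, Matrix.cons_val_three] at e0 e1 e2 e3
  have h00 : g 2 * (Q3.1.rep 0 * Q3.2.rep 0) =
      -(g 0 * (Q1.1.rep 0 * Q1.2.rep 0)) - g 1 * (Q2.1.rep 0 * Q2.2.rep 0) := by
    linear_combination e0
  have h01 : g 2 * (Q3.1.rep 0 * Q3.2.rep 1) =
      -(g 0 * (Q1.1.rep 0 * Q1.2.rep 1)) - g 1 * (Q2.1.rep 0 * Q2.2.rep 1) := by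
    linear_combination e1
  have h10 : g 2 * (Q3.1.rep 1 * Q3.2.rep 0) =
      -(g 0 * (Q1.1.rep 1 * Q1.2.rep 0)) - g 1 * (Q2.1.rep 1 * Q2.2.rep 0) := by
    linear_combination e2
  have h11 : g 2 * (Q3.1.rep 1 * Q3.2.rep 1) =
      -(g 0 * (Q1.1.rep 1 * Q1.2.rep 1)) - g 1 * (Q2.1.rep 1 * Q2.2.rep 1) := by
    linear_combination e3
  have hcomp : ∀ j k : Fin 2, g 2 * (Q3.1.rep j * Q3.2.rep k) =
      -(g 0 * (Q1.1.rep j * Q1.2.rep k)) - g 1 * (Q2.1.rep j * Q2.2.rep k) := by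
    intro j k
    fin_cases j <;> fin_cases k
    · exact h00
    · exact h01
    · exact h10
    · exact h11
  have key : g 0 * g 1 *
      ((Q1.1.rep 0 * Q2.1.rep 1 - Q1.1.rep 1 * Q2.1.rep 0) *
       (Q1.2.rep 0 * Q2.2.rep 1 - Q1.2.rep 1 * Q2.2.rep 0)) = 0 := by
    linear_combination (-(g 2 * (Q3.1.rep 1 * Q3.2.rep 1))) * h00
      + (g 0 * (Q1.1.rep 0 * Q1.2.rep 0) + g 1 * (Q2.1.rep 0 * Q2.2.rep 0)) * h11
      + (g 2 * (Q3.1.rep 1 * Q3.2.rep 0)) * h01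
      + (-(g 0 * (Q1.1.rep 0 * Q1.2.rep 1)) - g 1 * (Q2.1.rep 0 * Q2.2.rep 1)) * h10
  have hdd : (Q1.1.rep 0 * Q2.1.rep 1 - Q1.1.rep 1 * Q2.1.rep 0) = 0 ∨
      (Q1.2.rep 0 * Q2.2.rep 1 - Q1.2.rep 1 * Q2.2.rep 0) = 0 := by
    rcases mul_eq_zero.mp key with h | h
    · exact absurd h (mul_ne_zero hg0 hg1)
    · exact mul_eq_zero.mp h
  rcases hdd with hd | hd
  · obtain ⟨lam, hlam⟩ := dep_of_det Q1.1.rep_nonzero hd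
    have hlamne : lam ≠ 0 := by
      rintro rfl
      exact Q2.1.rep_nonzero (by simpa using hlam)
    have hcomp' : ∀ j k, (g 2 • Q3.1.rep) j * Q3.2.rep k =
        Q1.1.rep j * ((-(g 0)) • Q1.2.rep + (-(g 1) * lam) • Q2.2.rep) k := by
      intro j k
      have ha2 := congrFun hlam j
      simp only [Pi.add_apply, Pi.smul_apply, smul_eq_mul] at ha2 ⊢
      linear_combination hcomp j k - (g 1 * Q2.2.rep k) * ha2
    obtain ⟨lam1, mu1, hlam1, hmu1, he1, he2⟩ :=
      tensor_eq (smul_ne_zero hg2 Q3.1.rep_nonzero) Q3.2.rep_nonzero hcomp'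
    rw [smul_smul] at he1
    refine hfib1 ⟨proj_eq_of_smul (mul_ne_zero hlam1 hg2) he1, ?_⟩
    refine proj_eq_of_smul (lam := lam * (lam1 * g 2))
      (mul_ne_zero hlamne (mul_ne_zero hlam1 hg2)) ?_
    rw [hlam, he1, smul_smul]
  · obtain ⟨lam, hlam⟩ := dep_of_det Q1.2.rep_nonzero hd
    have hlamne : lam ≠ 0 := by
      rintro rfl
      exact Q2.2.rep_nonzero (by simpa using hlam)
    have hcomp' : ∀ j k, (g 2 • Q3.1.rep) j * Q3.2.rep k =
        ((-(g 0)) • Q1.1.rep + (-(g 1) * lam) • Q2.1.rep) j * Q1.2.rep k := by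
      intro j k
      have hb2 := congrFun hlam k
      simp only [Pi.add_apply, Pi.smul_apply, smul_eq_mul] at hb2 ⊢
      linear_combination hcomp j k - (g 1 * Q2.1.rep j) * hb2
    obtain ⟨lam1, mu1, hlam1, hmu1, he1, he2⟩ :=
      tensor_eq (smul_ne_zero hg2 Q3.1.rep_nonzero) Q3.2.rep_nonzero hcomp'
    refine hfib2 ⟨proj_eq_of_smul hmu1 he2, ?_⟩
    refine proj_eq_of_smul (lam := lam * mu1) (mul_ne_zero hlamne hmu1) ?_
    rw [hlam, he2, smul_smul]

-- Segre monomials of bidegree (1,1)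
def segMon : Fin 4 → MvPolynomial (Fin 4) ℂ := ![X 0 * X 2, X 0 * X 3, X 1 * X 2, X 1 * X 3]

lemma segmon_aux (i j : Fin 4) (h : biwt i + biwt j = (1,1)) :
    IsWeightedHomogeneous biwt (X i * X j : MvPolynomial (Fin 4) ℂ) (1,1) :=
  h ▸ (isWeightedHomogeneous_X ℂ biwt i).mul (isWeightedHomogeneous_X ℂ biwt j)

lemma segMon_bihom (j : Fin 4) : IsWeightedHomogeneous biwt (segMon j) (1, 1) := by
  fin_cases j
  · exact segmon_aux 0 2 (by simp [biwt])
  · exact segmon_aux 0 3 (by simp [biwt])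
  · exact segmon_aux 1 2 (by simp [biwt])
  · exact segmon_aux 1 3 (by simp [biwt])

lemma eval_segMon (Q : P1C × P1C) (j : Fin 4) :
    eval (pairRep Q) (segMon j) = seg Q j := by
  fin_cases j <;> simp [segMon, seg, pairRep]

lemma aeval_segMon (Q : P1C × P1C) (j : Fin 4) :
    aeval (pairRep Q) (segMon j) = seg Q j := by
  fin_cases j <;> simp [segMon, seg, pairRep]

-- the exponent function for the 9 basis monomials of bidegree (2,2)
def mexp (p : Fin 3 × Fin 3) : Fin 4 →₀ ℕ :=
  Finsupp.single 0 (p.1 : ℕ) + Finsupp.single 1 (2 - (p.1 : ℕ)) +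
  Finsupp.single 2 (p.2 : ℕ) + Finsupp.single 3 (2 - (p.2 : ℕ))

lemma mexp_apply (p : Fin 3 × Fin 3) :
    mexp p 0 = (p.1 : ℕ) ∧ mexp p 1 = 2 - (p.1 : ℕ) ∧
    mexp p 2 = (p.2 : ℕ) ∧ mexp p 3 = 2 - (p.2 : ℕ) := by
  refine ⟨?_, ?_, ?_, ?_⟩ <;>
    simp [mexp, Finsupp.single_apply]

lemma mexp_inj : Function.Injective mexp := by
  intro p q h
  have h0 := congrArg (fun f => f 0) h
  have h2 := congrArg (fun f => f 2) h
  simp only [(mexp_apply p).1, (mexp_apply q).1] at h0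
  have e0 : (p.1 : ℕ) = (q.1 : ℕ) := by
    simpa [mexp, Finsupp.single_apply] using h0
  have e2 : (p.2 : ℕ) = (q.2 : ℕ) := by
    simpa [mexp, Finsupp.single_apply] using h2
  exact Prod.ext (Fin.ext e0) (Fin.ext e2)

lemma weight_eq (m : Fin 4 →₀ ℕ) :
    Finsupp.weight biwt m = (m 0 + m 1, m 2 + m 3) := by
  rw [Finsupp.weight_apply, Finsupp.sum_fintype _ _ (fun i => by simp)]
  rw [Fin.sum_univ_four]
  simp [biwt, Prod.ext_iff]

lemma monomial_eq_prod (p q r s : ℕ) (c : ℂ) :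
    (monomial (Finsupp.single 0 p + Finsupp.single 1 q + Finsupp.single 2 r +
        Finsupp.single 3 s) c : MvPolynomial (Fin 4) ℂ) =
      C c * X 0 ^ p * X 1 ^ q * X 2 ^ r * X 3 ^ s := by
  simp [X_pow_eq_monomial, monomial_mul, C_mul_monomial, add_assoc]

def mon9 (p : Fin 3 × Fin 3) : MvPolynomial (Fin 4) ℂ := monomial (mexp p) 1

lemma mon9_eq (p : Fin 3 × Fin 3) : mon9 p =
    C 1 * X 0 ^ ((p.1 : ℕ)) * X 1 ^ (2 - (p.1 : ℕ)) * X 2 ^ ((p.2 : ℕ)) *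
      X 3 ^ (2 - (p.2 : ℕ)) :=
  monomial_eq_prod _ _ _ _ 1

lemma mon9_eq_segMon (p : Fin 3 × Fin 3) : ∃ a b : Fin 4, mon9 p = segMon a * segMon b := by
  obtain ⟨i, j⟩ := p
  fin_cases i <;> fin_cases j
  · exact ⟨3, 3, by rw [mon9_eq]; simp only [segMon, Matrix.cons_val]; norm_num; ring⟩
  · exact ⟨2, 3, by rw [mon9_eq]; simp only [segMon, Matrix.cons_val]; norm_num; ring⟩
  · exact ⟨2, 2, by rw [mon9_eq]; simp only [segMon, Matrix.cons_val]; norm_num; ring⟩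
  · exact ⟨1, 3, by rw [mon9_eq]; simp only [segMon, Matrix.cons_val]; norm_num; ring⟩
  · exact ⟨1, 2, by rw [mon9_eq]; simp only [segMon, Matrix.cons_val]; norm_num; ring⟩
  · exact ⟨0, 2, by rw [mon9_eq]; simp only [segMon, Matrix.cons_val]; norm_num; ring⟩
  · exact ⟨1, 1, by rw [mon9_eq]; norm_num [segMon]; ring⟩
  · exact ⟨0, 1, by rw [mon9_eq]; norm_num [segMon]; ring⟩
  · exact ⟨0, 0, by rw [mon9_eq]; norm_num [segMon]; ring⟩

lemma mon9_li : LinearIndependent ℂ mon9 := by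
  have h := (basisMonomials (Fin 4) ℂ).linearIndependent.comp mexp mexp_inj
  have e : ⇑(basisMonomials (Fin 4) ℂ) ∘ mexp = mon9 := by
    funext p
    rw [Function.comp_apply, coe_basisMonomials]
    rfl
  rwa [e] at h

lemma mon9_mem (p : Fin 3 × Fin 3) :
    mon9 p ∈ weightedHomogeneousSubmodule ℂ biwt ((2:ℕ), (2:ℕ)) := by
  rw [mem_weightedHomogeneousSubmodule]
  apply isWeightedHomogeneous_monomial
  rw [weight_eq]
  obtain ⟨h0, h1, h2, h3⟩ := mexp_apply p
  rw [h0, h1, h2, h3]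
  have l1 : (p.1 : ℕ) ≤ 2 := Fin.is_le p.1
  have l2 : (p.2 : ℕ) ≤ 2 := Fin.is_le p.2
  have e1 : (p.1 : ℕ) + (2 - (p.1 : ℕ)) = 2 := by omega
  have e2 : (p.2 : ℕ) + (2 - (p.2 : ℕ)) = 2 := by omega
  rw [e1, e2]

lemma finsupp_fin4_ext {m n : Fin 4 →₀ ℕ} (h0 : m 0 = n 0) (h1 : m 1 = n 1)
    (h2 : m 2 = n 2) (h3 : m 3 = n 3) : m = n := by
  ext i
  fin_cases i
  exacts [h0, h1, h2, h3]

lemma W_eq_span : weightedHomogeneousSubmodule ℂ biwt ((2:ℕ), (2:ℕ)) =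
    Submodule.span ℂ (Set.range mon9) := by
  apply le_antisymm
  · intro φ hφ
    rw [mem_weightedHomogeneousSubmodule] at hφ
    rw [← support_sum_monomial_coeff φ]
    apply Submodule.sum_mem
    intro v hv
    have hw := hφ (mem_support_iff.mp hv)
    rw [weight_eq, Prod.ext_iff] at hw
    have h01 : v 0 + v 1 = 2 := hw.1
    have h23 : v 2 + v 3 = 2 := hw.2
    have hv0 : v 0 < 3 := by omega
    have hv2 : v 2 < 3 := by omega
    set p0 : Fin 3 × Fin 3 := (⟨v 0, hv0⟩, ⟨v 2, hv2⟩) with hp0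
    have hveq : v = mexp p0 := by
      refine finsupp_fin4_ext ?_ ?_ ?_ ?_ <;>
      · simp [mexp, Finsupp.single_apply, hp0]
        try omega
    rw [hveq]
    have hs : (monomial (mexp p0) (coeff (mexp p0) φ) : MvPolynomial (Fin 4) ℂ) =
        coeff (mexp p0) φ • mon9 p0 := by
      rw [mon9, smul_monomial, smul_eq_mul, mul_one]
    rw [hs]
    exact Submodule.smul_mem _ _ (Submodule.subset_span ⟨p0, rfl⟩)
  · rw [Submodule.span_le]
    rintro _ ⟨p, rfl⟩
    exact mon9_mem p

lemma finiteDimensional_W :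
    FiniteDimensional ℂ (weightedHomogeneousSubmodule ℂ biwt ((2:ℕ), (2:ℕ))) :=
  W_eq_span ▸ FiniteDimensional.span_of_finite ℂ (Set.finite_range mon9)

lemma finrank_W :
    Module.finrank ℂ (weightedHomogeneousSubmodule ℂ biwt ((2:ℕ), (2:ℕ))) = 9 := by
  rw [W_eq_span, finrank_span_eq_card mon9_li]
  simp


def dotL (v : Fin 4 → ℂ) : (Fin 4 → ℂ) →ₗ[ℂ] ℂ := ∑ k, v k • LinearMap.proj k

lemma dotL_apply (v x : Fin 4 → ℂ) : dotL v x = ∑ k, v k * x k := by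
  simp [dotL]

def outer (v : Fin 4 → ℂ) : (Fin 4 → ℂ) →ₗ[ℂ] (Fin 4 → ℂ) := (dotL v).smulRight v

lemma outer_apply (v x : Fin 4 → ℂ) : outer v x = (∑ k, v k * x k) • v := by
  rw [outer, LinearMap.smulRight_apply, dotL_apply]

lemma dual_expand {n : ℕ} (g : Module.Dual ℂ (Fin n → ℂ)) (w : Fin n → ℂ) :
    g w = ∑ k, w k * g (Pi.single k 1) := by
  conv_lhs => rw [← Finset.univ_sum_single w]
  rw [map_sum]
  congr 1
  funext k
  have : Pi.single k (w k) = w k • (Pi.single k 1 : Fin n → ℂ) := by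
    funext j
    by_cases h : j = k <;> simp [Pi.single_apply, h]
  rw [this, map_smul, smul_eq_mul]

lemma range_add_le (f g : (Fin 4 → ℂ) →ₗ[ℂ] (Fin 4 → ℂ)) :
    LinearMap.range (f + g) ≤ LinearMap.range f ⊔ LinearMap.range g := by
  rintro _ ⟨y, rfl⟩
  exact Submodule.mem_sup.2 ⟨f y, ⟨y, rfl⟩, g y, ⟨y, rfl⟩, rfl⟩

lemma finrank_sup_le (p q : Submodule ℂ (Fin 4 → ℂ)) :
    finrank ℂ (p ⊔ q : Submodule ℂ (Fin 4 → ℂ)) ≤ finrank ℂ p + finrank ℂ q := by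
  have := Submodule.finrank_sup_add_finrank_inf_eq p q
  omega

lemma finrank_outer_le (c : ℂ) (v : Fin 4 → ℂ) :
    finrank ℂ (LinearMap.range (c • outer v)) ≤ 1 := by
  have hle : LinearMap.range (c • outer v) ≤ Submodule.span ℂ {v} := by
    rintro _ ⟨y, rfl⟩
    rw [LinearMap.smul_apply, outer_apply, smul_smul]
    exact Submodule.smul_mem _ _ (Submodule.mem_span_singleton_self v)
  refine le_trans (Submodule.finrank_mono hle) ?_
  by_cases hv : v = 0
  · subst hv
    rw [show ({0} : Set (Fin 4 → ℂ)) = ↑(⊥ : Submodule ℂ (Fin 4 → ℂ)) by simp,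
      Submodule.span_coe_eq_restrictScalars]
    haveI : Subsingleton ↥(Submodule.restrictScalars ℂ (⊥ : Submodule ℂ (Fin 4 → ℂ))) :=
      ⟨fun a b => Subtype.ext (by rw [(Submodule.mem_bot ℂ).1 a.2, (Submodule.mem_bot ℂ).1 b.2])⟩
    rw [Module.finrank_zero_of_subsingleton]; norm_num
  · rw [finrank_span_singleton hv]

lemma finrank_range_sum_le {ι : Type*} (F : Finset ι) (c : ι → ℂ) (v : ι → Fin 4 → ℂ) :
    finrank ℂ (LinearMap.range (∑ i ∈ F, c i • outer (v i))) ≤ F.card := by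
  induction F using Finset.induction with
  | empty =>
    rw [Finset.sum_empty, LinearMap.range_zero]
    exact (Module.finrank_zero_of_subsingleton (M := ↥(⊥ : Submodule ℂ (Fin 4 → ℂ)))).le.trans (Nat.zero_le _)
  | @insert a F' hnotmem ih =>
    rw [Finset.sum_insert hnotmem]
    refine le_trans (Submodule.finrank_mono (range_add_le _ _)) ?_
    refine le_trans (finrank_sup_le _ _) ?_
    rw [Finset.card_insert_of_notMem hnotmem]
    have := finrank_outer_le (c a) (v a)
    omega
lemma exists_dual_family {B : Finset (Fin 8)} {v : Fin 8 → Fin 4 → ℂ}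
    (hind : LinearIndependent ℂ (fun i : ↥B => v i)) {i0 : Fin 8} (hi0 : i0 ∈ B) :
    ∃ y : Fin 4 → ℂ, dotL (v i0) y = 1 ∧ ∀ i ∈ B, i ≠ i0 → dotL (v i) y = 0 := by
  have hx : v i0 ∉ span ℂ ((fun i : ↥B => v i) '' {x : ↥B | x.1 ≠ i0}) := by
    have := hind.notMem_span_image (s := {x : ↥B | x.1 ≠ i0}) (x := ⟨i0, hi0⟩) (by simp)
    exact this
  obtain ⟨g, hg1, hg2⟩ := Submodule.exists_dual_map_eq_bot_of_notMem hx inferInstance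
  have hker : span ℂ ((fun i : ↥B => v i) '' {x : ↥B | x.1 ≠ i0}) ≤ LinearMap.ker g := by
    intro z hz
    rw [LinearMap.mem_ker]
    have : g z ∈ Submodule.map g (span ℂ ((fun i : ↥B => v i) '' {x : ↥B | x.1 ≠ i0})) :=
      Submodule.mem_map_of_mem hz
    rw [hg2] at this
    simpa using this
  refine ⟨fun k => (g (v i0))⁻¹ * g (Pi.single k 1), ?_, ?_⟩
  · rw [dotL_apply]
    have : ∑ k, v i0 k * ((g (v i0))⁻¹ * g (Pi.single k 1)) =
        (g (v i0))⁻¹ * ∑ k, v i0 k * g (Pi.single k 1) := by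
      rw [Finset.mul_sum]; congr 1; funext k; ring
    rw [this, ← dual_expand, inv_mul_cancel₀ hg1]
  · intro i hi hne
    have hmem : v i ∈ span ℂ ((fun i : ↥B => v i) '' {x : ↥B | x.1 ≠ i0}) :=
      Submodule.subset_span ⟨⟨i, hi⟩, hne, rfl⟩
    have hz : g (v i) = 0 := hker hmem
    rw [dotL_apply]
    have : ∑ k, v i k * ((g (v i0))⁻¹ * g (Pi.single k 1)) =
        (g (v i0))⁻¹ * ∑ k, v i k * g (Pi.single k 1) := by
      rw [Finset.mul_sum]; congr 1; funext k; ring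
    rw [this, ← dual_expand, hz, mul_zero]

lemma span_le_range {B : Finset (Fin 8)} {v : Fin 8 → Fin 4 → ℂ} {c : Fin 8 → ℂ}
    (hind : LinearIndependent ℂ (fun i : ↥B => v i)) (hcB : ∀ i ∈ B, c i ≠ 0) :
    span ℂ (v '' ↑B) ≤ LinearMap.range (∑ i ∈ B, c i • outer (v i)) := by
  rw [span_le]
  rintro _ ⟨i, hi', rfl⟩
  have hi : i ∈ B := hi'
  obtain ⟨y, hy1, hy0⟩ := exists_dual_family hind hi
  have hci := hcB i hi
  refine ⟨(c i)⁻¹ • y, ?_⟩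
  rw [map_smul, LinearMap.sum_apply]
  have hterm : ∀ j ∈ B, (c j • outer (v j)) y = if j = i then c i • v i else 0 := by
    intro j hj
    rw [LinearMap.smul_apply, outer, LinearMap.smulRight_apply]
    by_cases h : j = i
    · subst h
      rw [hy1, one_smul, if_pos rfl]
    · rw [hy0 j hj h, zero_smul, smul_zero, if_neg h]
  rw [Finset.sum_congr rfl hterm, Finset.sum_ite_eq' B i (fun _ => c i • v i), if_pos hi,
    smul_smul, inv_mul_cancel₀ hci, one_smul]

lemma rel_bound {v : Fin 8 → Fin 4 → ℂ} {c : Fin 8 → ℂ} {S B : Finset (Fin 8)}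
    (hBS : B ⊆ S) (hS : ∀ i, i ∉ S → c i = 0)
    (hrel : ∑ i, c i • outer (v i) = 0)
    (hind : LinearIndependent ℂ (fun i : ↥B => v i))
    (hcB : ∀ i ∈ B, c i ≠ 0) :
    B.card ≤ (S \ B).card := by
  have hsum0 : ∑ i ∈ S, c i • outer (v i) = 0 := by
    rw [← hrel]
    apply Finset.sum_subset S.subset_univ
    intro x _ hx
    rw [hS x hx, zero_smul]
  rw [← Finset.sum_sdiff hBS, add_comm] at hsum0
  have hsplit : ∑ i ∈ B, c i • outer (v i) = - ∑ i ∈ S \ B, c i • outer (v i) :=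
    eq_neg_of_add_eq_zero_left hsum0
  have hfr : finrank ℂ (span ℂ (v '' ↑B)) = B.card := by
    have hr : Set.range (fun i : ↥B => v i) = v '' ↑B := (Set.image_eq_range v ↑B).symm
    rw [← hr, finrank_span_eq_card hind, Fintype.card_coe]
  have h1 : B.card ≤ finrank ℂ (LinearMap.range (∑ i ∈ B, c i • outer (v i))) := by
    rw [← hfr]
    exact Submodule.finrank_mono (span_le_range hind hcB)
  rw [hsplit] at h1
  have h2 : LinearMap.range (- ∑ i ∈ S \ B, c i • outer (v i)) =
      LinearMap.range (∑ i ∈ S \ B, c i • outer (v i)) := LinearMap.range_neg _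
  rw [h2] at h1
  exact le_trans h1 (finrank_range_sum_le _ _ _)

lemma card_le_of_indep {n : ℕ} {w : Fin n → Fin 4 → ℂ} (hw : LinearIndependent ℂ w)
    {V : Submodule ℂ (Fin 4 → ℂ)} (hV : ∀ i, w i ∈ V) : n ≤ finrank ℂ V := by
  have h1 : span ℂ (Set.range w) ≤ V := Submodule.span_le.2 (by rintro _ ⟨i, rfl⟩; exact hV i)
  have h2 := finrank_span_eq_card hw
  have h3 := Submodule.finrank_mono h1
  rw [h2, Fintype.card_fin] at h3
  exact h3

lemma full_support (P : Fin 8 → P1C × P1C) (hgen : GenPosP1P1 P) (c : Fin 8 → ℂ)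
    (hrel : ∀ j k : Fin 4, ∑ i, c i * (seg (P i) j * seg (P i) k) = 0)
    {j0 : Fin 8} (hj0 : c j0 = 0) : c = 0 := by
  by_contra hc
  have hex : ∃ i, c i ≠ 0 := by
    by_contra h
    push_neg at h
    exact hc (funext h)
  obtain ⟨iW, hiW⟩ := hex
  set v : Fin 8 → Fin 4 → ℂ := fun i => seg (P i) with hv
  have hrelOp : ∑ i, c i • outer (v i) = 0 := by
    apply LinearMap.ext
    intro x
    funext j
    simp only [LinearMap.sum_apply, LinearMap.smul_apply, outer_apply, Pi.smul_apply,
      smul_eq_mul, LinearMap.zero_apply, Pi.zero_apply, Finset.sum_apply]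
    have step1 : ∀ i : Fin 8, c i * ((∑ k, v i k * x k) * v i j) =
        ∑ k, x k * (c i * (v i j * v i k)) := by
      intro i
      rw [Finset.sum_mul, Finset.mul_sum]
      congr 1
      funext k
      ring
    rw [Finset.sum_congr rfl (fun i _ => step1 i), Finset.sum_comm]
    apply Finset.sum_eq_zero
    intro k _
    rw [← Finset.mul_sum]
    have : ∑ i, c i * (v i j * v i k) = 0 := by
      rw [← hrel j k]
    rw [this, mul_zero]
  set S : Finset (Fin 8) := Finset.univ.filter (fun i => c i ≠ 0) with hSdef
  have hiS : iW ∈ S := Finset.mem_filter.mpr ⟨Finset.mem_univ _, hiW⟩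
  have hmemS : ∀ i, i ∈ S ↔ c i ≠ 0 := by
    intro i
    simp [hSdef]
  have hScard : S.card ≤ 7 := by
    have hsub : S ⊆ Finset.univ.erase j0 := by
      intro i hi
      refine Finset.mem_erase.mpr ⟨?_, Finset.mem_univ _⟩
      rintro rfl
      exact ((hmemS i).mp hi) hj0
    calc S.card ≤ (Finset.univ.erase j0).card := Finset.card_le_card hsub
    _ = 7 := by rw [Finset.card_erase_of_mem (Finset.mem_univ _)]; simp
  obtain ⟨t, hts, hspan_eq, htind⟩ := exists_linearIndependent ℂ (v '' ↑S)
  set B : Finset (Fin 8) := S.filter (fun i => v i ∈ t) with hBdef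
  have hBS : B ⊆ S := Finset.filter_subset _ _
  have hvinj : Function.Injective v := by
    intro a b hab
    apply hgen.1
    exact point_eq_of_seg_smul (mu := 1) one_ne_zero (by rw [one_smul]; exact hab)
  have hindB : LinearIndependent ℂ (fun i : ↥B => v i) := by
    have hmap : ∀ i : ↥B, v i ∈ t := fun i => (Finset.mem_filter.mp i.2).2
    exact htind.comp (fun i : ↥B => (⟨v i, hmap i⟩ : t))
      (fun a b hab => Subtype.ext (hvinj (congrArg Subtype.val hab)))
  have hcB : ∀ i ∈ B, c i ≠ 0 := fun i hi => (hmemS i).mp (hBS hi)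
  have hS0 : ∀ i, i ∉ S → c i = 0 := by
    intro i hi
    by_contra h
    exact hi ((hmemS i).mpr h)
  have hmain := rel_bound hBS hS0 hrelOp hindB hcB
  have hsd : (S \ B).card = S.card - B.card := Finset.card_sdiff_of_subset hBS
  have himg : v '' ↑B = t := by
    apply Set.Subset.antisymm
    · rintro _ ⟨i, hi, rfl⟩
      exact (Finset.mem_filter.mp hi).2
    · intro x hx
      obtain ⟨i, hiS', rfl⟩ := hts hx
      exact ⟨i, Finset.mem_filter.mpr ⟨hiS', hx⟩, rfl⟩
  have hspanS : ∀ i ∈ S, v i ∈ span ℂ (v '' ↑B) := by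
    intro i hi
    rw [himg, hspan_eq]
    exact subset_span ⟨i, hi, rfl⟩
  have hfrB : finrank ℂ (span ℂ (v '' ↑B)) = B.card := by
    have hr : Set.range (fun i : ↥B => v i) = v '' ↑B := (Set.image_eq_range v ↑B).symm
    rw [← hr, finrank_span_eq_card hindB, Fintype.card_coe]
  have hPne : ∀ {a b : Fin 8}, a ≠ b → P a ≠ P b := by
    intro a b hab h
    exact hab (hgen.1 h)
  have hB1 : 1 ≤ B.card := by
    rw [← hfrB]
    refine card_le_of_indep (w := ![v iW]) ?_ ?_
    · refine linearIndependent_unique_iff.mpr ?_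
      exact seg_ne_zero (P iW)
    · intro i
      fin_cases i
      exact hspanS iW hiS
  have hB2 : 2 ≤ S.card → 2 ≤ B.card := by
    intro h2
    obtain ⟨a, ha, b, hb, hab⟩ := Finset.one_lt_card.mp h2
    rw [← hfrB]
    refine card_le_of_indep (w := ![v a, v b]) (pair_indep (hPne hab)) ?_
    intro i
    fin_cases i
    · exact hspanS a ha
    · exact hspanS b hb
  have hB3 : 3 ≤ S.card → 3 ≤ B.card := by
    intro h3
    obtain ⟨T, hTS, hT3⟩ := Finset.exists_subset_card_eq h3
    obtain ⟨a, b, d, hab, had, hbd, rfl⟩ := Finset.card_eq_three.mp hT3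
    have ha : a ∈ S := hTS (by simp)
    have hb : b ∈ S := hTS (by simp)
    have hd : d ∈ S := hTS (by simp)
    rw [← hfrB]
    have hfib1 : ¬((P a).1 = (P d).1 ∧ (P b).1 = (P d).1) := by
      rintro ⟨h1, h2⟩
      have hsub : ({a, b, d} : Set (Fin 8)) ⊆ {i : Fin 8 | (P i).1 = (P d).1} := by
        rintro x (rfl | rfl | rfl)
        · exact h1
        · exact h2
        · rfl
      have h3' : ({a, b, d} : Set (Fin 8)).ncard = 3 :=
        Set.ncard_eq_three.mpr ⟨a, b, d, hab, had, hbd, rfl⟩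
      have := Set.ncard_le_ncard hsub (Set.toFinite _)
      rw [h3'] at this
      exact absurd (le_trans this (hgen.2.1 (P d).1)) (by norm_num)
    have hfib2 : ¬((P a).2 = (P d).2 ∧ (P b).2 = (P d).2) := by
      rintro ⟨h1, h2⟩
      have hsub : ({a, b, d} : Set (Fin 8)) ⊆ {i : Fin 8 | (P i).2 = (P d).2} := by
        rintro x (rfl | rfl | rfl)
        · exact h1
        · exact h2
        · rfl
      have h3' : ({a, b, d} : Set (Fin 8)).ncard = 3 :=
        Set.ncard_eq_three.mpr ⟨a, b, d, hab, had, hbd, rfl⟩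
      have := Set.ncard_le_ncard hsub (Set.toFinite _)
      rw [h3'] at this
      exact absurd (le_trans this (hgen.2.2.1 (P d).2)) (by norm_num)
    refine card_le_of_indep (w := ![v a, v b, v d])
      (triple_indep (hPne hab) (hPne had) (hPne hbd) hfib1 hfib2) ?_
    intro i
    fin_cases i
    · exact hspanS a ha
    · exact hspanS b hb
    · exact hspanS d hd
  have hB4 : 5 ≤ S.card → 4 ≤ B.card := by
    intro h5
    by_contra hlt4
    push_neg at hlt4
    have hne_top : span ℂ (v '' ↑B) < ⊤ := by
      rw [lt_top_iff_ne_top]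
      intro htop
      have : finrank ℂ (span ℂ (v '' ↑B)) = 4 := by
        rw [htop, finrank_top]
        simp [Module.finrank_pi]
      omega
    obtain ⟨g, hgne, hgmap⟩ := Submodule.exists_dual_map_eq_bot_of_lt_top hne_top inferInstance
    have hker : span ℂ (v '' ↑B) ≤ LinearMap.ker g := by
      intro z hz
      rw [LinearMap.mem_ker]
      have : g z ∈ Submodule.map g (span ℂ (v '' ↑B)) := Submodule.mem_map_of_mem hz
      rw [hgmap] at this
      simpa using this
    set w : Fin 4 → ℂ := fun k => g (Pi.single k 1) with hwdef
    set p : MvPolynomial (Fin 4) ℂ := ∑ k, MvPolynomial.C (w k) * segMon k with hpdef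
    have heval : ∀ y : Fin 4 → ℂ, eval y p = ∑ k, w k * eval y (segMon k) := by
      intro y
      rw [hpdef, map_sum]
      congr 1
      funext k
      rw [map_mul, eval_C]
    have hw0 : w ≠ 0 := by
      intro h
      apply hgne
      apply LinearMap.ext
      intro z
      rw [dual_expand g z, LinearMap.zero_apply]
      apply Finset.sum_eq_zero
      intro k _
      rw [show g (Pi.single k 1) = w k from rfl, h, Pi.zero_apply, mul_zero]
    have hpne : p ≠ 0 := by
      intro hp0
      apply hw0
      funext k
      have hev : ∀ y : Fin 4 → ℂ, ∑ j, w j * eval y (segMon j) = 0 := by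
        intro y
        rw [← heval, hp0, map_zero]
      fin_cases k
      · have := hev ![1, 0, 1, 0]
        simpa [segMon, Fin.sum_univ_four] using this
      · have := hev ![1, 0, 0, 1]
        simpa [segMon, Fin.sum_univ_four] using this
      · have := hev ![0, 1, 1, 0]
        simpa [segMon, Fin.sum_univ_four] using this
      · have := hev ![0, 1, 0, 1]
        simpa [segMon, Fin.sum_univ_four] using this
    have hphom : Bihom p 1 1 := by
      have : p ∈ weightedHomogeneousSubmodule ℂ biwt ((1:ℕ), (1:ℕ)) := by
        apply Submodule.sum_mem
        intro k _
        rw [mem_weightedHomogeneousSubmodule]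
        have := (isWeightedHomogeneous_C biwt (w k)).mul (segMon_bihom k)
        rwa [zero_add] at this
      rwa [mem_weightedHomogeneousSubmodule] at this
    have hvanish : ∀ i ∈ S, evalPair p (P i) = 0 := by
      intro i hi
      rw [evalPair, heval]
      have : ∀ k, eval (pairRep (P i)) (segMon k) = v i k := fun k => eval_segMon (P i) k
      rw [Finset.sum_congr rfl (fun k _ => by rw [this k])]
      have he2 : ∑ k, w k * v i k = g (v i) := by
        rw [dual_expand g (v i)]
        congr 1
        funext k
        rw [mul_comm]
      rw [he2]
      exact hker (hspanS i hi)
    obtain ⟨T, hTS, hT5⟩ := Finset.exists_subset_card_eq h5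
    exact absurd (fun i hi => hvanish i (hTS hi)) (hgen.2.2.2 p hpne hphom T hT5)
  have hS1 : 1 ≤ S.card := Finset.card_pos.mpr ⟨iW, hiS⟩
  by_cases h5 : 5 ≤ S.card
  · have := hB4 h5
    omega
  by_cases h3 : 3 ≤ S.card
  · have := hB3 h3
    omega
  by_cases h2 : 2 ≤ S.card
  · have := hB2 h2
    omega
  · omega

def evalAt8 (j : Fin 8) : Module.Dual ℂ (Fin 8 → ℂ) →ₗ[ℂ] ℂ where
  toFun := fun φ => φ (Pi.single j 1)
  map_add' := by intros; simp
  map_smul' := by intros; simp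


end

theorem dim_bidegree_two_two_through_eight_points (P : Fin 8 → P1C × P1C)
    (hgen : GenPosP1P1 P) :
    Module.finrank ℂ ↥(biVanish 2 2 (Set.range P)) = 1 ∨
    Module.finrank ℂ ↥(biVanish 2 2 (Set.range P)) = 2 := by
  set W := weightedHomogeneousSubmodule ℂ biwt ((2:ℕ), (2:ℕ)) with hW
  haveI : FiniteDimensional ℂ ↥W := finiteDimensional_W
  set L : MvPolynomial (Fin 4) ℂ →ₗ[ℂ] (Fin 8 → ℂ) :=
    LinearMap.pi (fun i => evalLin (pairRep (P i))) with hL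
  set f : ↥W →ₗ[ℂ] (Fin 8 → ℂ) := L.comp W.subtype with hf
  have hK : biVanish 2 2 (Set.range P) = Submodule.map W.subtype (LinearMap.ker f) := by
    have h1 : (⨅ Q ∈ Set.range P, LinearMap.ker (evalLin (pairRep Q))) = LinearMap.ker L := by
      rw [LinearMap.ker_pi, iInf_range]
    have h2 : LinearMap.ker f = Submodule.comap W.subtype (LinearMap.ker L) :=
      LinearMap.ker_comp _ _
    rw [biVanish, h1, h2, Submodule.map_comap_subtype]
  have hfk : Module.finrank ℂ ↥(biVanish 2 2 (Set.range P)) =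
      Module.finrank ℂ ↥(LinearMap.ker f) := by
    rw [hK]
    exact Submodule.finrank_map_subtype_eq W _
  have hrn := f.finrank_range_add_finrank_ker
  rw [finrank_W] at hrn
  have hle8 : finrank ℂ ↥(LinearMap.range f) ≤ 8 := by
    have := Submodule.finrank_le (LinearMap.range f)
    simpa using this
  have hge7 : 7 ≤ finrank ℂ ↥(LinearMap.range f) := by
    by_contra hlt
    push_neg at hlt
    set U := LinearMap.range f with hU
    have hAnn : 2 ≤ finrank ℂ ↥U.dualAnnihilator := by
      have he := LinearEquiv.finrank_eq (Subspace.quotEquivAnnihilator U)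
      have hq := Submodule.finrank_quotient_add_finrank U
      have h8 : finrank ℂ (Fin 8 → ℂ) = 8 := by simp
      omega
    -- the coordinate-0 map on the annihilator is injective
    set ψ : ↥U.dualAnnihilator →ₗ[ℂ] ℂ := (evalAt8 0).comp U.dualAnnihilator.subtype with hψ
    have hinj : Function.Injective ψ := by
      rw [← LinearMap.ker_eq_bot, eq_bot_iff]
      intro φ hφ
      rw [LinearMap.mem_ker] at hφ
      have hφ0 : (φ : Module.Dual ℂ (Fin 8 → ℂ)) (Pi.single 0 1) = 0 := hφ
      set c : Fin 8 → ℂ := fun i => (φ : Module.Dual ℂ (Fin 8 → ℂ)) (Pi.single i 1) with hc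
      have hrelc : ∀ j k : Fin 4, ∑ i, c i * (seg (P i) j * seg (P i) k) = 0 := by
        intro j k
        have hqW : segMon j * segMon k ∈ W := by
          rw [hW, mem_weightedHomogeneousSubmodule]
          have := (segMon_bihom j).mul (segMon_bihom k)
          exact this
        have hfq : f ⟨segMon j * segMon k, hqW⟩ = fun i => seg (P i) j * seg (P i) k := by
          funext i
          show evalLin (pairRep (P i)) (segMon j * segMon k) = _
          rw [evalLin, AlgHom.toLinearMap_apply, map_mul, aeval_segMon, aeval_segMon]
        have hmem : (fun i => seg (P i) j * seg (P i) k) ∈ U := ⟨_, hfq⟩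
        have h0 : (φ : Module.Dual ℂ (Fin 8 → ℂ)) (fun i => seg (P i) j * seg (P i) k) = 0 :=
          (Submodule.mem_dualAnnihilator _).mp φ.2 _ hmem
        rw [dual_expand] at h0
        rw [← h0]
        apply Finset.sum_congr rfl
        intro i _
        rw [mul_comm]
      have hczero : c = 0 := full_support P hgen c hrelc (j0 := 0) hφ0
      have : (φ : Module.Dual ℂ (Fin 8 → ℂ)) = 0 := by
        apply LinearMap.ext
        intro y
        rw [dual_expand, LinearMap.zero_apply]
        apply Finset.sum_eq_zero
        intro i _
        have : (φ : Module.Dual ℂ (Fin 8 → ℂ)) (Pi.single i 1) = 0 := by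
          rw [show (φ : Module.Dual ℂ (Fin 8 → ℂ)) (Pi.single i 1) = c i from rfl, hczero]
          rfl
        rw [this, mul_zero]
      simpa using this
    have hle1 : finrank ℂ ↥U.dualAnnihilator ≤ 1 := by
      have := LinearMap.finrank_le_finrank_of_injective hinj
      simpa using this
    omega
  rw [hfk]
  omega
end

section
/- Let P₁,…,P₅ be five distinct points of ℙ¹(ℂ)×ℙ¹(ℂ) in general position. Then the complex vector space of bihomogeneous forms of bidegree (1,2) vanishing at all five points has dimension exactly 1. -/
open MvPolynomial
open scoped Classical

/-!
The space of `(1,2)`-forms is 6-dimensional, so it suffices that vanishing at the five points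
imposes independent conditions, i.e. that the vectors of values of the products `x_ε y_m y_n` at
the points are linearly independent. Given a relation `c` among them, multiplying by the
coordinate `y_η` of the second factor gives two relations among the images of the points under
the Segre embedding `ℙ¹ × ℙ¹ → ℙ³`. As no `(1,1)`-form vanishes at all five points, these images
span `ℂ⁴`, so their relations form a line and the two relations are proportional. This places all
points with `c i ≠ 0` on one fibre of `pr₂`, which holds at most two of them, with distinct first
coordinates; their relation then reduces to one between at most two distinct points of `ℙ¹`,
which is trivial.
-/

open Module
open scoped LinearAlgebra.Projectivization

noncomputable section

section LinearAlgebra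

variable {K V V₂ : Type*} [Field K] [AddCommGroup V] [Module K V] [AddCommGroup V₂] [Module K V₂]

theorem LinearMap.surjective_of_linearIndependent_proj_comp {ι : Type*} [Fintype ι]
    (f : V →ₗ[K] ι → K) (hf : LinearIndependent K fun i => LinearMap.proj i ∘ₗ f) :
    Function.Surjective f := by
  rw [← LinearMap.dualMap_injective_iff, injective_iff_map_eq_zero]
  intro φ hφ
  have hcoeff :=
    Fintype.linearIndependent_iff.1 hf (fun i => φ fun j => if i = j then 1 else 0) <| by
    ext v
    simpa [LinearMap.pi_apply_eq_sum_univ φ (f v), mul_comm] using LinearMap.congr_fun hφ v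
  refine LinearMap.ext fun y => ?_
  simp [LinearMap.pi_apply_eq_sum_univ φ y, hcoeff]

theorem Submodule.exists_smul_add_smul_eq_zero_of_finrank_le_one {W : Submodule K V}
    [FiniteDimensional K W] (hW : finrank K W ≤ 1) {u v : V} (hu : u ∈ W) (hv : v ∈ W) :
    ∃ α β : K, (α ≠ 0 ∨ β ≠ 0) ∧ α • u + β • v = 0 := by
  by_contra! h
  have hind : LinearIndependent K ![(⟨u, hu⟩ : W), ⟨v, hv⟩] := by
    refine LinearIndependent.pair_iff.2 fun s t hst => ?_
    by_contra hne
    exact h s t (not_and_or.1 hne) (congrArg Subtype.val hst)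
  simpa using hind.fintype_card_le_finrank.trans hW

theorem Submodule.finrank_inf_ker_add_finrank {W : Submodule K V} [FiniteDimensional K W]
    (f : V →ₗ[K] V₂) (hf : Function.Surjective (f.domRestrict W)) :
    finrank K ↥(W ⊓ LinearMap.ker f) + finrank K V₂ = finrank K W := by
  have hker :
      finrank K (LinearMap.ker (f.domRestrict W)) = finrank K ↥(W ⊓ LinearMap.ker f) := by
    rw [LinearMap.ker_domRestrict, ← Submodule.map_comap_subtype]
    exact (Submodule.equivMapOfInjective _ W.injective_subtype _).finrank_eq
  rw [← hker, ← LinearMap.finrank_range_add_finrank_ker (f.domRestrict W),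
    LinearMap.range_eq_top.2 hf, finrank_top, add_comm]

namespace Projectivization

theorem rep_injective : Function.Injective (Projectivization.rep : ℙ K V → V) := fun p q h => by
  rw [← mk_rep p, ← mk_rep q]
  simp only [h]

theorem eq_of_apply_rep_eq_zero [FiniteDimensional K V] (hV : finrank K V = 2)
    {φ : Module.Dual K V} (hφ : φ ≠ 0) {p q : ℙ K V} (hp : φ p.rep = 0) (hq : φ q.rep = 0) :
    p = q := by
  have hker : finrank K (LinearMap.ker φ) ≤ 1 := by
    have := Module.Dual.finrank_ker_add_one_of_ne_zero hφ
    omega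
  obtain ⟨α, β, hαβ, hrel⟩ :=
    Submodule.exists_smul_add_smul_eq_zero_of_finrank_le_one hker hp hq
  by_contra hne
  rw [← ne_eq, ← linearIndependent_pair_iff_ne, LinearIndependent.pair_iff] at hne
  have := hne α β hrel
  tauto

theorem eq_zero_of_sum_smul_rep_eq_zero {ι : Type*} [Fintype ι] {f : ι → ℙ K V} {c : ι → K}
    (hc : {i | c i ≠ 0}.ncard ≤ 2) (hf : Set.InjOn f {i | c i ≠ 0})
    (hsum : ∑ i, c i • (f i).rep = 0) : c = 0 := by
  set s := {i | c i ≠ 0}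
  by_contra! hne
  obtain ⟨i₀, hi₀⟩ : s.Nonempty := by
    obtain ⟨i, hi⟩ := Function.ne_iff.1 hne
    exact ⟨i, hi⟩
  obtain ⟨D, D', hDD'⟩ : ∃ D D' : ℙ K V, (fun i => (f i).rep) '' s ⊆ {D.rep, D'.rep} := by
    rcases (Nat.le_succ_iff.1 hc) with h1 | h2
    · refine ⟨f i₀, f i₀, ?_⟩
      rintro _ ⟨i, hi, rfl⟩
      simp [(Set.ncard_le_one_iff).1 h1 hi hi₀]
    · obtain ⟨x, y, -, hxy⟩ := Set.ncard_eq_two.1 h2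
      refine ⟨f x, f y, ?_⟩
      rw [hxy, Set.image_pair]
  have hind : LinearIndepOn K (fun i => (f i).rep) s := by
    rw [linearIndepOn_iff_image (f := fun i => (f i).rep) (rep_injective.comp_injOn hf)]
    exact (linearIndepOn_pair D D').mono hDD'
  have hzero := linearIndepOn_iff.1 hind (Finsupp.equivFunOnFinite.symm c)
    (by intro i; simp [s]) (by simpa [Finsupp.linearCombination_apply, Finsupp.sum_fintype])
  exact hne (funext fun i => by simpa using DFunLike.congr_fun hzero i)

end Projectivization

end LinearAlgebra

section BihomogeneousForms

lemma biwt_castAdd (ε : Fin 2) : biwt (Fin.castAdd 2 ε) = (1, 0) := by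
  fin_cases ε <;> rfl

lemma biwt_natAdd (η : Fin 2) : biwt (Fin.natAdd 2 η) = (0, 1) := by
  fin_cases η <;> rfl

lemma pairRep_castAdd (Q : P1C × P1C) (ε : Fin 2) :
    pairRep Q (Fin.castAdd 2 ε) = Q.1.rep ε := by
  fin_cases ε <;> rfl

lemma pairRep_natAdd (Q : P1C × P1C) (η : Fin 2) :
    pairRep Q (Fin.natAdd 2 η) = Q.2.rep η := by
  fin_cases η <;> rfl

def bideg11Form (c : Fin 2 × Fin 2 → ℂ) : MvPolynomial (Fin 4) ℂ :=
  ∑ x, C (c x) * (X (Fin.castAdd 2 x.1) * X (Fin.natAdd 2 x.2))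

lemma bihom_bideg11Form (c : Fin 2 × Fin 2 → ℂ) : Bihom (bideg11Form c) 1 1 := by
  refine IsWeightedHomogeneous.sum _ _ _ fun x _ => IsWeightedHomogeneous.C_mul ?_ _
  have h := (isWeightedHomogeneous_X ℂ biwt (Fin.castAdd 2 x.1)).mul
    (isWeightedHomogeneous_X ℂ biwt (Fin.natAdd 2 x.2))
  rwa [biwt_castAdd, biwt_natAdd] at h

lemma eval_bideg11Form (v : Fin 4 → ℂ) (c : Fin 2 × Fin 2 → ℂ) :
    eval v (bideg11Form c) = ∑ x, c x * (v (Fin.castAdd 2 x.1) * v (Fin.natAdd 2 x.2)) := by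
  simp [bideg11Form]

lemma bideg11Form_ne_zero {c : Fin 2 × Fin 2 → ℂ} (hc : c ≠ 0) : bideg11Form c ≠ 0 := by
  obtain ⟨x, hx⟩ := Function.ne_iff.1 hc
  intro h
  have := congrArg (eval (Fin.append (Pi.single x.1 1) (Pi.single x.2 1))) h
  rw [map_zero, eval_bideg11Form] at this
  simp only [Fin.append_left, Fin.append_right] at this
  simp [Pi.single_apply, Fintype.sum_prod_type] at this
  exact hx this

def bideg12Exponent (x : Fin 2 × Fin 3) : Fin 4 →₀ ℕ :=
  Finsupp.equivFunOnFinite.symm ![1 - x.1, x.1, 2 - x.2, x.2]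

lemma bideg12Exponent_apply (x : Fin 2 × Fin 3) (k : Fin 4) :
    bideg12Exponent x k = ![1 - (x.1 : ℕ), x.1, 2 - x.2, x.2] k := rfl

lemma weight_biwt_apply (d : Fin 4 →₀ ℕ) :
    Finsupp.weight biwt d = (d 0 + d 1, d 2 + d 3) := by
  rw [Finsupp.weight_apply, Finsupp.sum_fintype _ _ (by simp)]
  simp [Fin.sum_univ_four, biwt, Prod.ext_iff]

lemma weight_bideg12Exponent (x : Fin 2 × Fin 3) :
    Finsupp.weight biwt (bideg12Exponent x) = (1, 2) := by
  simp only [weight_biwt_apply, bideg12Exponent_apply, Prod.ext_iff]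
  simp
  omega

lemma bideg12Exponent_injective : Function.Injective bideg12Exponent := by
  intro x y h
  have h1 := DFunLike.congr_fun h 1
  have h3 := DFunLike.congr_fun h 3
  simp only [bideg12Exponent_apply] at h1 h3
  simp at h1 h3
  exact Prod.ext (Fin.ext h1) (Fin.ext h3)

lemma exists_bideg12Exponent_eq {d : Fin 4 →₀ ℕ} (hd : Finsupp.weight biwt d = (1, 2)) :
    ∃ x, bideg12Exponent x = d := by
  simp only [weight_biwt_apply, Prod.ext_iff] at hd
  refine ⟨(⟨d 1, by omega⟩, ⟨d 3, by omega⟩), Finsupp.ext fun k => ?_⟩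
  fin_cases k <;> simp [bideg12Exponent_apply] <;> omega

def bideg12ExponentEquiv : Fin 2 × Fin 3 ≃ {d : Fin 4 →₀ ℕ | Finsupp.weight biwt d = (1, 2)} :=
  Equiv.ofBijective (fun x => ⟨bideg12Exponent x, weight_bideg12Exponent x⟩)
    ⟨fun _ _ h => bideg12Exponent_injective (congrArg Subtype.val h),
      fun ⟨_, hd⟩ => (exists_bideg12Exponent_eq hd).imp fun _ hx => Subtype.ext hx⟩

theorem finrank_bidegree_one_two :
    finrank ℂ (weightedHomogeneousSubmodule ℂ biwt ((1 : ℕ), (2 : ℕ))) = 6 := by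
  rw [weightedHomogeneousSubmodule_eq_finsupp_supported,
    (AddMonoidAlgebra.supportedEquivFinsupp _).finrank_eq,
    ← (Finsupp.domLCongr bideg12ExponentEquiv).finrank_eq]
  simp

instance : FiniteDimensional ℂ (weightedHomogeneousSubmodule ℂ biwt ((1 : ℕ), (2 : ℕ))) :=
  Module.finite_of_finrank_pos (by rw [finrank_bidegree_one_two]; norm_num)

end BihomogeneousForms

def segre (Q : P1C × P1C) : Fin 2 × Fin 2 → ℂ := fun x => Q.1.rep x.1 * Q.2.rep x.2

/-- The values at `Q` of the products `x_ε y_m y_n` (`x = (s,t)`, `y = (u,v)`): a linear relation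
among the vectors `segreVeronese (P i)` is one among the evaluations at `P i` of `(1,2)`-forms. -/
def segreVeronese (Q : P1C × P1C) : Fin 2 × Fin 2 × Fin 2 → ℂ :=
  fun x => Q.1.rep x.1 * (Q.2.rep x.2.1 * Q.2.rep x.2.2)

namespace GenPosP1P1

variable {P : Fin 5 → P1C × P1C}

theorem eq_zero_of_forall_dotProduct_segre_eq_zero (hgen : GenPosP1P1 P)
    {c : Fin 2 × Fin 2 → ℂ} (hc : ∀ i, c ⬝ᵥ segre (P i) = 0) : c = 0 := by
  by_contra hc0
  refine hgen.2.2.2 (bideg11Form c) (bideg11Form_ne_zero hc0) (bihom_bideg11Form c)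
    Finset.univ (by simp) fun i _ => ?_
  rw [evalPair, eval_bideg11Form]
  simp only [pairRep_castAdd, pairRep_natAdd]
  exact hc i

theorem span_segre_eq_top (hgen : GenPosP1P1 P) :
    Submodule.span ℂ (Set.range fun i => segre (P i)) = ⊤ := by
  rw [← Fintype.range_linearCombination, LinearMap.range_eq_top]
  refine LinearMap.surjective_of_linearIndependent_proj_comp _
    (Fintype.linearIndependent_iff.2 fun g hg => ?_)
  refine congrFun (hgen.eq_zero_of_forall_dotProduct_segre_eq_zero fun i => ?_)
  simpa [dotProduct, Fintype.linearCombination_apply, Pi.single_apply, ite_apply] using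
    LinearMap.congr_fun hg (Pi.single i 1)

theorem exists_smul_add_smul_eq_zero (hgen : GenPosP1P1 P) {μ ν : Fin 5 → ℂ}
    (hμ : ∑ i, μ i • segre (P i) = 0) (hν : ∑ i, ν i • segre (P i) = 0) :
    ∃ α β : ℂ, (α ≠ 0 ∨ β ≠ 0) ∧ α • μ + β • ν = 0 := by
  set L := Fintype.linearCombination ℂ fun i => segre (P i)
  have hker : finrank ℂ (LinearMap.ker L) ≤ 1 := by
    have := L.finrank_range_add_finrank_ker
    rw [Fintype.range_linearCombination, hgen.span_segre_eq_top, finrank_top] at this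
    simp at this
    omega
  exact Submodule.exists_smul_add_smul_eq_zero_of_finrank_le_one hker
    (by simpa [L, Fintype.linearCombination_apply] using hμ)
    (by simpa [L, Fintype.linearCombination_apply] using hν)

theorem snd_eq_of_sum_smul_segreVeronese_eq_zero (hgen : GenPosP1P1 P) {c : Fin 5 → ℂ}
    (hc : ∑ i, c i • segreVeronese (P i) = 0) {i j : Fin 5} (hi : c i ≠ 0) (hj : c j ≠ 0) :
    (P i).2 = (P j).2 := by
  have hrel (η : Fin 2) : ∑ k, (c k * (P k).2.rep η) • segre (P k) = 0 := by
    funext x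
    have := congrFun hc (x.1, x.2, η)
    simp only [Finset.sum_apply, Pi.smul_apply, smul_eq_mul, segreVeronese,
      Pi.zero_apply] at this ⊢
    rw [← this]
    exact Finset.sum_congr rfl fun k _ => by simp only [segre]; ring
  obtain ⟨α, β, hαβ, hαβrel⟩ := hgen.exists_smul_add_smul_eq_zero (hrel 0) (hrel 1)
  set φ : Module.Dual ℂ (Fin 2 → ℂ) := α • LinearMap.proj 0 + β • LinearMap.proj 1
  have hφ : φ ≠ 0 := by
    intro h
    have h0 := LinearMap.congr_fun h (Pi.single 0 1)
    have h1 := LinearMap.congr_fun h (Pi.single 1 1)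
    simp [φ] at h0 h1
    tauto
  have hker (k : Fin 5) (hk : c k ≠ 0) : φ (P k).2.rep = 0 := by
    have := congrFun hαβrel k
    simp only [Pi.add_apply, Pi.smul_apply, smul_eq_mul, Pi.zero_apply] at this
    refine mul_left_cancel₀ hk ?_
    simp only [φ, LinearMap.add_apply, LinearMap.smul_apply, LinearMap.proj_apply, smul_eq_mul]
    linear_combination this
  exact Projectivization.eq_of_apply_rep_eq_zero (by simp) hφ (hker i hi) (hker j hj)

theorem linearIndependent_segreVeronese (hgen : GenPosP1P1 P) :
    LinearIndependent ℂ fun i => segreVeronese (P i) := by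
  refine Fintype.linearIndependent_iff.2 fun c hc => ?_
  by_contra! hne
  obtain ⟨i₀, hi₀⟩ := hne
  set q := (P i₀).2
  have hsnd (i : Fin 5) (hi : c i ≠ 0) : (P i).2 = q :=
    hgen.snd_eq_of_sum_smul_segreVeronese_eq_zero hc hi hi₀
  obtain ⟨m, hm⟩ : ∃ m, q.rep m ≠ 0 := by
    by_contra! h
    exact q.rep_nonzero (funext h)
  have hfst : ∑ i, c i • (P i).1.rep = 0 := by
    funext ε
    refine mul_right_cancel₀ (mul_ne_zero hm hm) ?_
    have := congrFun hc (ε, m, m)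
    simp only [Finset.sum_apply, Pi.smul_apply, smul_eq_mul, Pi.zero_apply, Finset.sum_mul,
      zero_mul] at this ⊢
    rw [← this]
    refine Finset.sum_congr rfl fun i _ => ?_
    by_cases hi : c i = 0
    · simp [hi]
    · simp only [segreVeronese, hsnd i hi]
      ring
  have hzero := Projectivization.eq_zero_of_sum_smul_rep_eq_zero (f := fun i => (P i).1)
    ((Set.ncard_le_ncard fun i hi => hsnd i hi).trans (hgen.2.2.1 q))
    (fun i hi j hj h => hgen.1 (Prod.ext h ((hsnd i hi).trans (hsnd j hj).symm))) hfst
  exact hi₀ (congrFun hzero i₀)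

theorem surjective_eval_bidegree_one_two (hgen : GenPosP1P1 P) :
    Function.Surjective ((LinearMap.pi fun i => evalLin (pairRep (P i))).domRestrict
      (weightedHomogeneousSubmodule ℂ biwt ((1 : ℕ), (2 : ℕ)))) := by
  refine LinearMap.surjective_of_linearIndependent_proj_comp _
    (Fintype.linearIndependent_iff.2 fun g hg => ?_)
  refine Fintype.linearIndependent_iff.1 hgen.linearIndependent_segreVeronese g
    (funext fun x => ?_)
  have hmem : IsWeightedHomogeneous biwt
      (X (Fin.castAdd 2 x.1) * (X (Fin.natAdd 2 x.2.1) * X (Fin.natAdd 2 x.2.2)) :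
        MvPolynomial (Fin 4) ℂ) ((1 : ℕ), (2 : ℕ)) := by
    have h := (isWeightedHomogeneous_X ℂ biwt (Fin.castAdd 2 x.1)).mul
      ((isWeightedHomogeneous_X ℂ biwt (Fin.natAdd 2 x.2.1)).mul
        (isWeightedHomogeneous_X ℂ biwt (Fin.natAdd 2 x.2.2)))
    rwa [biwt_castAdd, biwt_natAdd, biwt_natAdd] at h
  have := LinearMap.congr_fun hg ⟨_, hmem⟩
  simp only [LinearMap.sum_apply, LinearMap.smul_apply, LinearMap.comp_apply,
    LinearMap.domRestrict_apply, LinearMap.pi_apply, LinearMap.proj_apply, evalLin,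
    AlgHom.toLinearMap_apply, map_mul, aeval_X, pairRep_castAdd, pairRep_natAdd] at this
  simpa [segreVeronese] using this

end GenPosP1P1

lemma biVanish_range_eq_inf_ker {ι : Type*} (a b : ℕ) (P : ι → P1C × P1C) :
    biVanish a b (Set.range P) = weightedHomogeneousSubmodule ℂ biwt (a, b) ⊓
      LinearMap.ker (LinearMap.pi fun i => evalLin (pairRep (P i))) := by
  ext p
  simp [biVanish, funext_iff]

end

theorem dim_bidegree_one_two_through_five_points (P : Fin 5 → P1C × P1C)
    (hgen : GenPosP1P1 P) :
    Module.finrank ℂ ↥(biVanish 1 2 (Set.range P)) = 1 := by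
  have := Submodule.finrank_inf_ker_add_finrank _ hgen.surjective_eval_bidegree_one_two
  rw [finrank_bidegree_one_two, ← biVanish_range_eq_inf_ker] at this
  simpa using this
end
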